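/- arXiv:0807.3212 — 3 statements merged into one kernel-verified Lean document; each statement's English description precedes it below -/
import Mathlib

section
/- Let q be a prime power, v ≥ k ≥ d ≥ 1 integers, G a subgroup of GL(v, GF(q)), and m a natural number. Let ω_1, ω_2, … be the orbits of G on the k-dimensional subspaces and Ω_1, Ω_2, … the orbits of G on the (k−d+1)-dimensional subspaces of GF(q)^v. There exists a constant dimension code C in GF(q)^v of dimension k with exactly m codewords and minimum subspace distance at least 2d such that C is invariant under G (i.e., G is contained in the automorphism group of C) if and only if there exists a choice x_1, x_2, … ∈ {0,1}, one value per orbit ω_j, with Σ_j |ω_j|·x_j = m and, for every orbit Ω_i with representative W, Σ_j |{V ∈ ω_j : W ⊆ V}|·x_j ≤ 1. -/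
open Module

/-- The subspace distance `d_S(V,W) := dim(V+W) − dim(V∩W)`. -/
noncomputable def subspaceDist (F : Type*) [Field F] {M : Type*} [AddCommGroup M]
    [Module F M] (V W : Submodule F M) : ℕ :=
  finrank F ↥(V ⊔ W) - finrank F ↥(V ⊓ W)

private lemma exists_submodule_le_finrank_eq {F M : Type*} [Field F] [AddCommGroup M]
    [Module F M] (S : Submodule F M) (n : ℕ) (hn : n ≤ finrank F S) :
    ∃ U : Submodule F M, U ≤ S ∧ finrank F U = n := by
  obtain ⟨f, hf⟩ := exists_linearIndependent_of_le_finrank (R := F) (M := ↥S) hn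
  have hfi : LinearIndependent F (fun i : Fin n => (f i : M)) :=
    hf.map' S.subtype (Submodule.ker_subtype S)
  refine ⟨Submodule.span F (Set.range fun i => (f i : M)), ?_, ?_⟩
  · rw [Submodule.span_le]
    rintro _ ⟨i, rfl⟩
    exact (f i).2
  · rw [finrank_span_eq_card hfi, Fintype.card_fin]

/-- **Theorem 2 of the paper.** Let `G ≤ GL(v, GF(q))`.  There is a
constant dimension code of dimension `k` with exactly `m` codewords and minimum
subspace distance at least `2d` that is invariant under `G` if and only if there is a
`{0,1}`-valued choice, one value per `G`-orbit on the `k`-dimensional subspaces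
(encoded below as a `G`-invariant `{0,1}`-valued function `x` on the `k`-dimensional
subspaces), with `Σ_j |ω_j|·x_j = m` (i.e. the sum of `x` over all `k`-dimensional
subspaces is `m`), and for every `(k−d+1)`-dimensional subspace `W`
`Σ_j |{V ∈ ω_j : W ⊆ V}|·x_j ≤ 1` (i.e. the sum of `x(V)` over the `k`-dimensional
subspaces `V ⊇ W` is at most `1`). -/
theorem code_with_automorphisms_iff_condensed_system (q v k d m : ℕ)
    (hd : 1 ≤ d) (hdk : d ≤ k) (hkv : k ≤ v)
    (F : Type) [Field F] [Fintype F] (hq : Fintype.card F = q)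
    (G : Subgroup (LinearMap.GeneralLinearGroup F (Fin v → F))) :
    (∃ C : Set (Submodule F (Fin v → F)),
        (∀ V ∈ C, finrank F ↥V = k) ∧ C.ncard = m ∧
        (∀ V ∈ C, ∀ W ∈ C, V ≠ W → 2 * d ≤ subspaceDist F V W) ∧
        (∀ g ∈ G, ∀ V ∈ C,
          Submodule.map (g : (Fin v → F) →ₗ[F] (Fin v → F)) V ∈ C))
    ↔ (∃ x : Submodule F (Fin v → F) → ℕ,
        (∀ V, x V ≤ 1) ∧
        (∀ g ∈ G, ∀ V : Submodule F (Fin v → F),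
          x (Submodule.map (g : (Fin v → F) →ₗ[F] (Fin v → F)) V) = x V) ∧
        (∑ᶠ (V : Submodule F (Fin v → F)) (_ : finrank F ↥V = k), x V) = m ∧
        ∀ W : Submodule F (Fin v → F), finrank F ↥W = k - d + 1 →
          (∑ᶠ (V : Submodule F (Fin v → F)) (_ : finrank F ↥V = k ∧ W ≤ V), x V)
            ≤ 1) := by
  classical
  have hfin : Finite (Submodule F (Fin v → F)) :=
    Finite.of_injective (fun S : Submodule F (Fin v → F) => (S : Set (Fin v → F)))
      SetLike.coe_injective
  haveI : Fintype (Submodule F (Fin v → F)) := Fintype.ofFinite _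
  -- helper: convert the finsums to finset sums
  have hsum : ∀ (x : Submodule F (Fin v → F) → ℕ) (p : Submodule F (Fin v → F) → Prop),
      (∑ᶠ (V) (_ : p V), x V) = ∑ V ∈ Finset.univ.filter p, x V := by
    intro x p
    refine finsum_cond_eq_sum_of_cond_iff x fun {V} _ => ?_
    simp
  -- helper: inverse map
  have hinv : ∀ (g : LinearMap.GeneralLinearGroup F (Fin v → F))
      (V : Submodule F (Fin v → F)),
      Submodule.map ((g⁻¹ : _) : (Fin v → F) →ₗ[F] (Fin v → F))
        (Submodule.map (g : (Fin v → F) →ₗ[F] (Fin v → F)) V) = V := by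
    intro g V
    rw [← Submodule.map_comp]
    have h1 : (((g⁻¹ : _) : (Fin v → F) →ₗ[F] (Fin v → F)).comp
        (g : (Fin v → F) →ₗ[F] (Fin v → F))) = LinearMap.id := by
      rw [← Module.End.mul_eq_comp, ← Units.val_mul, inv_mul_cancel, Units.val_one]
      rfl
    rw [h1, Submodule.map_id]
  -- helper: finrank is preserved by elements of GL
  have hrk : ∀ (g : LinearMap.GeneralLinearGroup F (Fin v → F))
      (V : Submodule F (Fin v → F)),
      finrank F ↥(Submodule.map (g : (Fin v → F) →ₗ[F] (Fin v → F)) V) = finrank F ↥V := by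
    intro g V
    have := LinearEquiv.finrank_map_eq
      (LinearMap.GeneralLinearGroup.generalLinearEquiv F (Fin v → F) g) V
    rwa [LinearMap.GeneralLinearGroup.generalLinearEquiv_to_linearMap] at this
  -- helper: dimension formula
  have hdim : ∀ V W : Submodule F (Fin v → F),
      finrank F ↥(V ⊔ W) + finrank F ↥(V ⊓ W) = finrank F ↥V + finrank F ↥W :=
    fun V W => Submodule.finrank_sup_add_finrank_inf_eq V W
  constructor
  · rintro ⟨C, hCk, hCm, hCd, hCG⟩
    have hCfin : C.Finite := Set.toFinite C
    refine ⟨fun V => if V ∈ C then 1 else 0, fun V => by by_cases h : V ∈ C <;> simp [h], ?_, ?_, ?_⟩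
    · intro g hg V
      by_cases hV : V ∈ C
      · simp [hV, hCG g hg V hV]
      · have hgV : Submodule.map (g : (Fin v → F) →ₗ[F] (Fin v → F)) V ∉ C := by
          intro hmem
          have := hCG g⁻¹ (G.inv_mem hg) _ hmem
          rw [hinv g V] at this
          exact hV this
        simp [hV, hgV]
    · rw [hsum, ← Finset.card_filter, ← Set.ncard_coe_finset, ← hCm]
      congr 1
      ext V
      simp only [Finset.coe_filter, Set.mem_setOf_eq, Finset.mem_filter, Finset.mem_univ,
        true_and]
      exact ⟨fun h => h.2, fun h => ⟨hCk V h, h⟩⟩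
    · intro W hW
      rw [hsum, ← Finset.card_filter]
      refine Finset.card_le_one.mpr ?_
      intro a ha b hb
      simp only [Finset.mem_filter, Finset.mem_univ, true_and] at ha hb
      by_contra hne
      have h1 := hCd a ha.2 b hb.2 hne
      have h2 := hdim a b
      have h4 : k - d + 1 ≤ finrank F ↥(a ⊓ b) := by
        rw [← hW]
        exact Submodule.finrank_mono (le_inf ha.1.2 hb.1.2)
      have ha1 := ha.1.1
      have hb1 := hb.1.1
      unfold subspaceDist at h1
      omega
  · rintro ⟨x, hx1, hxG, hxm, hxW⟩
    refine ⟨{V | finrank F ↥V = k ∧ x V = 1}, fun V hV => hV.1, ?_, ?_, ?_⟩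
    · have key : ∀ s : Finset (Submodule F (Fin v → F)),
          (∀ V ∈ s, finrank F ↥V = k) → (∀ V : Submodule F (Fin v → F), finrank F ↥V = k → V ∈ s) →
          ({V : Submodule F (Fin v → F) | finrank F ↥V = k ∧ x V = 1}).ncard = ∑ V ∈ s, x V := by
        intro s hs1 hs2
        have hset : {V : Submodule F (Fin v → F) | finrank F ↥V = k ∧ x V = 1}
            = ↑(s.filter fun V => x V = 1) := by
          ext V
          simp only [Set.mem_setOf_eq, Finset.coe_filter]
          exact ⟨fun h => ⟨hs2 V h.1, h.2⟩, fun h => ⟨hs1 V h.1, h.2⟩⟩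
        rw [hset, Set.ncard_coe_finset, Finset.card_filter]
        refine Finset.sum_congr rfl fun V hVs => ?_
        have := hx1 V
        split <;> omega
      rw [hsum] at hxm
      rw [← hxm]
      refine key _ (fun V hV => ?_) (fun V hV => ?_)
      · simp only [Finset.mem_filter] at hV
        exact hV.2
      · simp only [Finset.mem_filter, Finset.mem_univ, true_and]
        exact hV
    · intro V hV W hW hne
      by_contra hlt
      push_neg at hlt
      have h2 := hdim V W
      have hrV : finrank F ↥(V ⊓ W) ≤ k := by
        rw [← hV.1]; exact Submodule.finrank_mono inf_le_left
      have hsV : k ≤ finrank F ↥(V ⊔ W) := by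
        rw [← hV.1]; exact Submodule.finrank_mono le_sup_left
      have hVk : finrank F ↥V = k := hV.1
      have hWk : finrank F ↥W = k := hW.1
      unfold subspaceDist at hlt
      have hr : k - d + 1 ≤ finrank F ↥(V ⊓ W) := by omega
      obtain ⟨U, hUle, hUrk⟩ := exists_submodule_le_finrank_eq (V ⊓ W) (k - d + 1) hr
      have hle := hxW U hUrk
      rw [hsum] at hle
      have h2le : x V + x W ≤ 1 := by
        refine le_trans ?_ hle
        rw [← Finset.sum_pair hne]
        refine Finset.sum_le_sum_of_subset ?_
        intro a ha
        simp only [Finset.mem_insert, Finset.mem_singleton] at ha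
        simp only [Finset.mem_filter, Finset.mem_univ, true_and]
        rcases ha with rfl | rfl
        · exact ⟨hV.1, hUle.trans inf_le_left⟩
        · exact ⟨hW.1, hUle.trans inf_le_right⟩
      have := hV.2
      have := hW.2
      omega
    · intro g hg V hV
      exact ⟨by rw [hrk g V]; exact hV.1, by rw [hxG g hg V]; exact hV.2⟩
end

section
/- Let q be a prime power, v > k ≥ 2, let g ∈ GL(v, GF(q)) be such that ⟨g⟩ acts transitively on the one-dimensional subspaces of GF(q)^v, and set N = (q^v − 1)/(q − 1). For a natural number n, there exists a constant dimension code C in GF(q)^v of dimension k with exactly n·N codewords and minimum subspace distance at least 2(k−1) that is invariant under ⟨g⟩ if and only if there exist n distinct orbits of ⟨g⟩ on the k-dimensional subspaces whose distance distributions are each multiplicity-free (no repeated element) and pairwise disjoint (no value occurs in the distance distributions of two different chosen orbits); in that case C is the union of these n orbits and each of them has length N. -/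
open Module
set_option linter.unusedSectionVars false

/-- The set `E(U) = {i ∈ Z/NZ : g^i(L_0) ⊆ U}`, where each residue class is
represented by its value in `{0, …, N−1}`. -/
def Eset (F : Type*) [Field F] {M : Type*} [AddCommGroup M] [Module F M]
    (g : LinearMap.GeneralLinearGroup F M) (N : ℕ) (L0 U : Submodule F M) :
    Set (ZMod N) :=
  {i | Submodule.map ((g ^ i.val : LinearMap.GeneralLinearGroup F M) : M →ₗ[F] M)
        L0 ≤ U}

/-- The circular distance `min((i−j) mod N, (j−i) mod N)` on `Z/NZ`. -/
def circDist (N : ℕ) (i j : ZMod N) : ℕ := min (i - j).val (j - i).val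

/-- The distance distribution `D_U` has no repeated element: two unordered pairs of
distinct elements of `E(U)` with the same circular distance must coincide. -/
def multiplicityFree (F : Type*) [Field F] {M : Type*} [AddCommGroup M] [Module F M]
    (g : LinearMap.GeneralLinearGroup F M) (N : ℕ) (L0 U : Submodule F M) : Prop :=
  ∀ i ∈ Eset F g N L0 U, ∀ j ∈ Eset F g N L0 U,
    ∀ i' ∈ Eset F g N L0 U, ∀ j' ∈ Eset F g N L0 U,
      i ≠ j → i' ≠ j' → circDist N i j = circDist N i' j' →
        ({i, j} : Set (ZMod N)) = {i', j'}

/-- The value `c` occurs in the distance distribution `D_U`. -/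
def valueOccurs (F : Type*) [Field F] {M : Type*} [AddCommGroup M] [Module F M]
    (g : LinearMap.GeneralLinearGroup F M) (N : ℕ) (L0 U : Submodule F M)
    (c : ℕ) : Prop :=
  ∃ a ∈ Eset F g N L0 U, ∃ b ∈ Eset F g N L0 U, a ≠ b ∧ circDist N a b = c

/-- The orbit `{g^m(U) : m ∈ ℤ}` of a subspace `U` under the cyclic group `⟨g⟩`. -/
def singerOrbit (F : Type*) [Field F] {M : Type*} [AddCommGroup M] [Module F M]
    (g : LinearMap.GeneralLinearGroup F M) (U : Submodule F M) :
    Set (Submodule F M) :=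
  {V | ∃ m : ℤ,
    Submodule.map ((g ^ m : LinearMap.GeneralLinearGroup F M) : M →ₗ[F] M) U = V}


namespace SingerAux

variable {F : Type} [Field F] [Fintype F] {M : Type} [AddCommGroup M] [Module F M]

/-- map along `g^m` for `m : ℤ`. -/
noncomputable def orbm (g : LinearMap.GeneralLinearGroup F M) (m : ℤ) (U : Submodule F M) :
    Submodule F M :=
  Submodule.map ((g ^ m : LinearMap.GeneralLinearGroup F M) : M →ₗ[F] M) U

variable (g : LinearMap.GeneralLinearGroup F M)

lemma orbm_zero (U : Submodule F M) : orbm g 0 U = U := by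
  simp [orbm, Module.End.one_eq_id, Submodule.map_id]

lemma orbm_add (a b : ℤ) (U : Submodule F M) : orbm g (a + b) U = orbm g a (orbm g b U) := by
  unfold orbm
  rw [zpow_add, Units.val_mul, Module.End.mul_eq_comp, Submodule.map_comp]

lemma orbm_cancel {a : ℤ} {U V : Submodule F M} (h : orbm g a U = orbm g a V) : U = V := by
  have := congrArg (orbm g (-a)) h
  rwa [← orbm_add, ← orbm_add, neg_add_cancel, orbm_zero, orbm_zero] at this

lemma orbm_eq_iff (a : ℤ) (U V : Submodule F M) : orbm g a U = V ↔ U = orbm g (-a) V := by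
  constructor
  · rintro rfl; rw [← orbm_add, neg_add_cancel, orbm_zero]
  · rintro rfl; rw [← orbm_add, add_neg_cancel, orbm_zero]

lemma orbm_le_iff (a : ℤ) (U V : Submodule F M) : orbm g a U ≤ V ↔ U ≤ orbm g (-a) V := by
  constructor
  · intro h
    have h2 := Submodule.map_mono (f := ((g ^ (-a) : LinearMap.GeneralLinearGroup F M) : M →ₗ[F] M)) h
    change orbm g (-a) (orbm g a U) ≤ orbm g (-a) V at h2
    rwa [← orbm_add, neg_add_cancel, orbm_zero] at h2
  · intro h
    have h2 := Submodule.map_mono (f := ((g ^ a : LinearMap.GeneralLinearGroup F M) : M →ₗ[F] M)) h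
    change orbm g a U ≤ orbm g a (orbm g (-a) V) at h2
    rwa [← orbm_add, add_neg_cancel, orbm_zero] at h2

lemma orbm_finrank (a : ℤ) (U : Submodule F M) : finrank F (orbm g a U) = finrank F U := by
  have : orbm g a U = Submodule.map
      ((LinearMap.GeneralLinearGroup.generalLinearEquiv F M (g ^ a) : M ≃ₗ[F] M) : M →ₗ[F] M) U := by
    unfold orbm
    congr 1
  rw [this, LinearEquiv.finrank_map_eq]

lemma orbm_sup (a : ℤ) (U V : Submodule F M) :
    orbm g a (U ⊔ V) = orbm g a U ⊔ orbm g a V := Submodule.map_sup _ _ _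


section Lines

variable (F : Type) [Field F] [Fintype F] {M : Type} [AddCommGroup M] [Module F M]

lemma finrank_sup_two {L1 L2 : Submodule F M} [FiniteDimensional F M] (h1 : finrank F L1 = 1)
    (h2 : finrank F L2 = 1) (hne : L1 ≠ L2) : finrank F ↥(L1 ⊔ L2) = 2 := by
  have hinf : L1 ⊓ L2 = ⊥ := by
    by_contra hbot
    have hne1 : L1 ⊓ L2 ≠ L1 := by
      intro he
      have hle : L1 ≤ L2 := by rw [← he]; exact inf_le_right
      exact hne (Submodule.eq_of_le_of_finrank_le hle (by omega))
    have hlt : L1 ⊓ L2 < L1 := lt_of_le_of_ne inf_le_left hne1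
    have := Submodule.finrank_lt_finrank_of_lt hlt
    rw [h1] at this
    interval_cases h : finrank F ↥(L1 ⊓ L2)
    exact hbot (Submodule.finrank_eq_zero.1 h)
  have := Submodule.finrank_sup_add_finrank_inf_eq L1 L2
  rw [hinf, h1, h2] at this
  simpa using this

lemma exists_three_lines {S : Submodule F M} [FiniteDimensional F M] (h : 2 ≤ finrank F S) :
    ∃ L1 L2 L3 : Submodule F M,
      (finrank F L1 = 1 ∧ finrank F L2 = 1 ∧ finrank F L3 = 1) ∧
      (L1 ≤ S ∧ L2 ≤ S ∧ L3 ≤ S) ∧ L1 ≠ L2 ∧ L1 ≠ L3 ∧ L2 ≠ L3 := by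
  have hS : S ≠ ⊥ := by
    intro hb
    rw [hb] at h
    simp [finrank_bot] at h
  obtain ⟨x, hxS, hx0⟩ := Submodule.exists_mem_ne_zero_of_ne_bot hS
  have hxlt : Submodule.span F {x} < S := by
    refine lt_of_le_of_ne ((Submodule.span_singleton_le_iff_mem x S).2 hxS) ?_
    intro he
    rw [← he, finrank_span_singleton hx0] at h
    omega
  obtain ⟨y, hyS, hynx⟩ := SetLike.exists_of_lt hxlt
  have hy0 : y ≠ 0 := by rintro rfl; exact hynx (Submodule.zero_mem _)
  have hxy0 : x + y ≠ 0 := by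
    intro he
    apply hynx
    have : y = (-1 : F) • x := by
      rw [neg_one_smul]
      linear_combination (norm := module) he
    rw [this]
    exact Submodule.smul_mem _ _ (Submodule.mem_span_singleton_self x)
  refine ⟨Submodule.span F {x}, Submodule.span F {y}, Submodule.span F {x + y},
    ⟨finrank_span_singleton hx0, finrank_span_singleton hy0, finrank_span_singleton hxy0⟩,
    ⟨(Submodule.span_singleton_le_iff_mem x S).2 hxS,
     (Submodule.span_singleton_le_iff_mem y S).2 hyS,
     (Submodule.span_singleton_le_iff_mem _ S).2 (Submodule.add_mem _ hxS hyS)⟩, ?_, ?_, ?_⟩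
  · intro he
    exact hynx (he ▸ Submodule.mem_span_singleton_self y)
  · intro he
    apply hynx
    have hxy : x + y ∈ Submodule.span F {x} := he ▸ Submodule.mem_span_singleton_self (x + y)
    have := Submodule.sub_mem _ hxy (Submodule.mem_span_singleton_self x)
    simpa using this
  · intro he
    apply hynx
    have hxy : x + y ∈ Submodule.span F {y} := he ▸ Submodule.mem_span_singleton_self (x + y)
    have hxmem : x ∈ Submodule.span F {y} := by
      have := Submodule.sub_mem _ hxy (Submodule.mem_span_singleton_self y)
      simpa using this
    obtain ⟨c, hc⟩ := Submodule.mem_span_singleton.1 hxmem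
    have hc0 : c ≠ 0 := by rintro rfl; simp at hc; exact hx0 hc.symm
    have : y = c⁻¹ • x := by rw [← hc, smul_smul, inv_mul_cancel₀ hc0, one_smul]
    rw [this]
    exact Submodule.smul_mem _ _ (Submodule.mem_span_singleton_self x)

lemma two_lines_le_finrank {S L1 L2 : Submodule F M} [FiniteDimensional F M]
    (h1 : finrank F L1 = 1) (h2 : finrank F L2 = 1) (hne : L1 ≠ L2)
    (hle1 : L1 ≤ S) (hle2 : L2 ≤ S) : 2 ≤ finrank F S := by
  have := finrank_sup_two F h1 h2 hne
  have hle : L1 ⊔ L2 ≤ S := sup_le hle1 hle2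
  have := Submodule.finrank_mono hle
  omega

/-- In the plane spanned by two distinct lines there is a third line. -/
lemma exists_third_line {L1 L2 : Submodule F M} [FiniteDimensional F M]
    (h1 : finrank F L1 = 1) (h2 : finrank F L2 = 1) (hne : L1 ≠ L2) :
    ∃ L3 : Submodule F M, finrank F L3 = 1 ∧ L3 ≤ L1 ⊔ L2 ∧ L3 ≠ L1 ∧ L3 ≠ L2 := by
  have hsup : 2 ≤ finrank F ↥(L1 ⊔ L2) := le_of_eq (finrank_sup_two F h1 h2 hne).symm
  obtain ⟨A, B, C, ⟨hA, hB, hC⟩, ⟨hAle, hBle, hCle⟩, hAB, hAC, hBC⟩ :=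
    exists_three_lines F hsup
  by_cases hA1 : A = L1
  · by_cases hB1 : B = L2
    · exact ⟨C, hC, hCle, fun h => hAC (hA1.trans h.symm), fun h => hBC (hB1.trans h.symm)⟩
    · by_cases hB2 : B = L1
      · exact absurd (hA1.trans hB2.symm) hAB
      · exact ⟨B, hB, hBle, hB2, hB1⟩
  · by_cases hA2 : A = L2
    · by_cases hB1 : B = L1
      · exact ⟨C, hC, hCle, fun h => hBC (hB1.trans h.symm), fun h => hAC (hA2.trans h.symm)⟩
      · exact ⟨B, hB, hBle, hB1, fun h => hAB (hA2.trans h.symm)⟩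
    · exact ⟨A, hA, hAle, hA1, hA2⟩

/-- Counting 1-dimensional subspaces of a finite module. -/
lemma card_lines_mul [Fintype M] :
    {L : Submodule F M | finrank F L = 1}.ncard * (Fintype.card F - 1)
      = Fintype.card F ^ finrank F M - 1 := by
  classical
  haveI : Finite (Submodule F M) :=
    Finite.of_injective (fun L => (L : Set M)) SetLike.coe_injective
  haveI : Fintype (Submodule F M) := Fintype.ofFinite _
  set q := Fintype.card F with hq
  have hq2 : 2 ≤ q := Fintype.one_lt_card
  -- the map sending a nonzero vector to its span
  let f : {x : M // x ≠ 0} → {L : Submodule F M // finrank F L = 1} :=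
    fun x => ⟨Submodule.span F {x.1}, finrank_span_singleton x.2⟩
  have hcard1 : Fintype.card {x : M // x ≠ 0} = q ^ finrank F M - 1 := by
    rw [Fintype.card_subtype_compl (p := fun x => x = (0:M)), Fintype.card_subtype_eq]
    rw [← card_eq_pow_finrank (K := F) (V := M)]
  have hfiber : ∀ L : {L : Submodule F M // finrank F L = 1},
      Fintype.card {x : {x : M // x ≠ 0} // f x = L} = q - 1 := by
    intro L
    have he : {x : {x : M // x ≠ 0} // f x = L} ≃ {y : ↥L.1 // y ≠ 0} := by
      refine ⟨fun p => ⟨⟨p.1.1, ?_⟩, ?_⟩, fun y => ⟨⟨y.1.1, ?_⟩, ?_⟩, ?_, ?_⟩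
      · have : Submodule.span F {p.1.1} = L.1 := congrArg Subtype.val p.2
        rw [← this]
        exact Submodule.mem_span_singleton_self _
      · intro hz
        exact p.1.2 (by simpa using congrArg Subtype.val hz)
      · intro hz
        exact y.2 (Subtype.ext hz)
      · apply Subtype.ext
        show Submodule.span F {y.1.1} = L.1
        apply Submodule.eq_of_le_of_finrank_le
        · exact (Submodule.span_singleton_le_iff_mem _ _).2 y.1.2
        · rw [L.2, finrank_span_singleton]
          intro hz
          exact y.2 (Subtype.ext hz)
      · intro p
        apply Subtype.ext
        apply Subtype.ext
        rfl
      · intro y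
        apply Subtype.ext
        apply Subtype.ext
        rfl
    rw [Fintype.card_congr he]
    have : Fintype.card ↥L.1 = q := by
      rw [card_eq_pow_finrank (K := F) (V := ↥L.1), L.2, pow_one]
    rw [Fintype.card_subtype_compl (p := fun y => y = (0: ↥L.1)), Fintype.card_subtype_eq, this]
  have hsum := Fintype.card_congr (Equiv.sigmaFiberEquiv f).symm
  rw [Fintype.card_sigma] at hsum
  rw [hcard1] at hsum
  have : ∀ L, Fintype.card {x : {x : M // x ≠ 0} // f x = L} = q - 1 := hfiber
  simp only [this, Finset.sum_const, smul_eq_mul, Finset.card_univ] at hsum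
  have hncard : {L : Submodule F M | finrank F L = 1}.ncard
      = Fintype.card {L : Submodule F M // finrank F L = 1} := by
    rw [← Nat.card_coe_set_eq, Nat.card_eq_fintype_card]
    exact Fintype.card_congr (Equiv.subtypeEquivRight (fun _ => Iff.rfl))
  rw [hncard]
  omega

end Lines


section Singer

variable {F : Type} [Field F] [Fintype F] {M : Type} [AddCommGroup M] [Module F M]
  [Fintype M] [FiniteDimensional F M]

/-- The hypotheses we carry around. -/
structure Setup (g : LinearMap.GeneralLinearGroup F M) (L0 : Submodule F M) (N : ℕ) : Prop where
  hL0 : finrank F L0 = 1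
  hsurj : ∀ L : Submodule F M, finrank F L = 1 → ∃ m : ℤ, orbm g m L0 = L
  hNpos : 0 < N
  hper : orbm g (N : ℤ) L0 = L0
  hinj : ∀ a b : ℤ, orbm g a L0 = orbm g b L0 → (N : ℤ) ∣ (a - b)

variable {g : LinearMap.GeneralLinearGroup F M} {L0 : Submodule F M} {N : ℕ}

lemma orbm_comm (a b : ℤ) (U : Submodule F M) :
    orbm g a (orbm g b U) = orbm g b (orbm g a U) := by
  rw [← orbm_add, add_comm, orbm_add]

lemma orbm_shift {c : ℤ} {U : Submodule F M} (hc : orbm g c U = U) (x : ℤ) :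
    ∀ t : ℤ, orbm g (x + c * t) U = orbm g x U := by
  have step : ∀ y : ℤ, orbm g (y + c) U = orbm g y U := by
    intro y; rw [orbm_add, hc]
  have stepneg : ∀ y : ℤ, orbm g (y - c) U = orbm g y U := by
    intro y
    have := step (y - c)
    rw [sub_add_cancel] at this
    exact this.symm
  intro t
  induction t using Int.induction_on with
  | zero => simp
  | succ t ih =>
      have h2 : x + c * ((t : ℤ) + 1) = (x + c * t) + c := by ring
      rw [h2, step, ih]
  | pred t ih =>
      have h2 : x + c * (-(t : ℤ) - 1) = (x + c * (-(t:ℤ))) - c := by ring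
      rw [h2, stepneg, ih]

lemma orbm_mod_period {c : ℤ} {U : Submodule F M} (hc : orbm g c U = U) (hcpos : 0 < c) (z : ℤ) :
    orbm g z U = orbm g (z % c) U := by
  have h3 : z % c = z + c * (-(z / c)) := by
    have h := Int.mul_ediv_add_emod z c
    linear_combination h
  rw [h3, orbm_shift hc]

/-- Existence of the minimal period of a submodule under `g`, given some positive period. -/
lemma exists_minimal_period {U : Submodule F M} {n0 : ℕ} (h0 : 0 < n0)
    (hn0 : orbm g (n0 : ℤ) U = U) :
    ∃ d : ℕ, 0 < d ∧ orbm g (d : ℤ) U = U ∧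
      (∀ t : ℕ, 0 < t → t < d → orbm g (t : ℤ) U ≠ U) ∧
      (∀ z : ℤ, orbm g z U = U → (d : ℤ) ∣ z) ∧ d ∣ n0 := by
  classical
  have hex : ∃ t : ℕ, 0 < t ∧ orbm g (t : ℤ) U = U := ⟨n0, h0, hn0⟩
  set d := Nat.find hex with hd
  obtain ⟨hdpos, hdper⟩ := Nat.find_spec hex
  have hmin : ∀ t : ℕ, 0 < t → t < d → orbm g (t : ℤ) U ≠ U := by
    intro t ht htd habs
    exact Nat.find_min hex htd ⟨ht, habs⟩
  have hdvd : ∀ z : ℤ, orbm g z U = U → (d : ℤ) ∣ z := by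
    intro z hz
    have hr : orbm g (z % (d : ℤ)) U = U := by
      rw [← orbm_mod_period hdper (by exact_mod_cast hdpos) z, hz]
    have hr0 : 0 ≤ z % (d : ℤ) := Int.emod_nonneg z (by exact_mod_cast hdpos.ne')
    have hrlt : z % (d : ℤ) < d := Int.emod_lt_of_pos z (by exact_mod_cast hdpos)
    by_contra hnd
    have hrne : z % (d : ℤ) ≠ 0 := by
      intro habs
      exact hnd (Int.dvd_of_emod_eq_zero habs)
    have : orbm g ((z % (d : ℤ)).toNat : ℤ) U = U := by
      rwa [Int.toNat_of_nonneg hr0]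
    exact hmin _ (by omega) (by omega) this
  refine ⟨d, hdpos, hdper, hmin, hdvd, ?_⟩
  have := hdvd n0 hn0
  exact_mod_cast this

/-- `g^N` maps every line to itself. -/
lemma line_fix (hs : Setup g L0 N) {L : Submodule F M} (hL : finrank F L = 1) :
    orbm g (N : ℤ) L = L := by
  obtain ⟨m, rfl⟩ := hs.hsurj L hL
  rw [orbm_comm, hs.hper]

/-- `g^N` maps every submodule to itself. -/
lemma fixN (hs : Setup g L0 N) (U : Submodule F M) : orbm g (N : ℤ) U = U := by
  have hle : orbm g (N : ℤ) U ≤ U := by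
    rintro y ⟨x, hx, rfl⟩
    by_cases hx0 : x = 0
    · subst hx0
      simpa using Submodule.zero_mem U
    · have hlx : finrank F (Submodule.span F {x}) = 1 := finrank_span_singleton hx0
      have hfix := line_fix hs hlx
      have hmem : ((g ^ (N : ℤ) : LinearMap.GeneralLinearGroup F M) : M →ₗ[F] M) x
          ∈ orbm g (N : ℤ) (Submodule.span F {x}) :=
        Submodule.mem_map_of_mem (Submodule.mem_span_singleton_self x)
      rw [hfix] at hmem
      exact (Submodule.span_singleton_le_iff_mem x U).2 hx hmem
  exact Submodule.eq_of_le_of_finrank_le hle (le_of_eq (orbm_finrank g _ U).symm)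

lemma orbm_mod (hs : Setup g L0 N) (z : ℤ) (U : Submodule F M) :
    orbm g z U = orbm g (z % (N : ℤ)) U :=
  orbm_mod_period (fixN hs U) (by exact_mod_cast hs.hNpos) z

/-- The line indexed by an element of `ZMod N`. -/
noncomputable def lineZ (g : LinearMap.GeneralLinearGroup F M) (L0 : Submodule F M) {N : ℕ}
    (i : ZMod N) : Submodule F M :=
  orbm g (i.val : ℤ) L0

lemma lineZ_int (hs : Setup g L0 N) (z : ℤ) :
    orbm g z L0 = lineZ g L0 (z : ZMod N) := by
  haveI : NeZero N := ⟨hs.hNpos.ne'⟩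
  rw [lineZ, ZMod.val_intCast, ← orbm_mod hs]

lemma lineZ_finrank (hs : Setup g L0 N) (i : ZMod N) : finrank F (lineZ g L0 i) = 1 := by
  rw [lineZ, orbm_finrank]; exact hs.hL0

lemma lineZ_inj (hs : Setup g L0 N) {i j : ZMod N} (h : lineZ g L0 i = lineZ g L0 j) :
    i = j := by
  haveI : NeZero N := ⟨hs.hNpos.ne'⟩
  have hd := hs.hinj _ _ h
  have hd2 : N ∣ ((i.val : ℤ) - (j.val : ℤ)).natAbs := by
    have := Int.natAbs_dvd_natAbs.2 hd
    simpa using this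
  have hi : i.val < N := ZMod.val_lt i
  have hj : j.val < N := ZMod.val_lt j
  have hlt : ((i.val : ℤ) - (j.val : ℤ)).natAbs < N := by omega
  have h0 := Nat.eq_zero_of_dvd_of_lt hd2 hlt
  have : i.val = j.val := by omega
  calc i = ((i.val : ℕ) : ZMod N) := by rw [ZMod.natCast_val, ZMod.cast_id]
    _ = ((j.val : ℕ) : ZMod N) := by rw [this]
    _ = j := by rw [ZMod.natCast_val, ZMod.cast_id]

lemma mem_eset_iff (U : Submodule F M) (i : ZMod N) :
    i ∈ Eset F g N L0 U ↔ lineZ g L0 i ≤ U := by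
  show Submodule.map ((g ^ i.val : LinearMap.GeneralLinearGroup F M) : M →ₗ[F] M) L0 ≤ U ↔ _
  rw [show (g ^ i.val : LinearMap.GeneralLinearGroup F M) = g ^ (i.val : ℤ) from
    (zpow_natCast g i.val).symm]
  exact Iff.rfl

lemma natCast_val_eq_self {i : ZMod N} (hs : Setup g L0 N) : ((i.val : ℤ) : ZMod N) = i := by
  haveI : NeZero N := ⟨hs.hNpos.ne'⟩
  rw [Int.cast_natCast, ZMod.natCast_val, ZMod.cast_id]

lemma eset_orbm (hs : Setup g L0 N) (U : Submodule F M) (m : ℤ) (i : ZMod N) :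
    i ∈ Eset F g N L0 (orbm g m U) ↔ i - (m : ZMod N) ∈ Eset F g N L0 U := by
  rw [mem_eset_iff, mem_eset_iff]
  have h1 : lineZ g L0 i ≤ orbm g m U ↔ orbm g (-m) (lineZ g L0 i) ≤ U := by
    rw [orbm_le_iff g (-m), neg_neg]
  rw [h1]
  have h2 : orbm g (-m) (lineZ g L0 i) = lineZ g L0 (i - (m : ZMod N)) := by
    haveI : NeZero N := ⟨hs.hNpos.ne'⟩
    rw [lineZ, ← orbm_add, lineZ_int hs]
    congr 1
    push_cast
    rw [ZMod.natCast_val, ZMod.cast_id]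
    ring
  rw [h2]

end Singer


section Orbits

variable {F : Type} [Field F] [Fintype F] {M : Type} [AddCommGroup M] [Module F M]
  [Fintype M] [FiniteDimensional F M]
variable {g : LinearMap.GeneralLinearGroup F M} {L0 : Submodule F M} {N : ℕ}

lemma mem_orbit_iff {U V : Submodule F M} :
    V ∈ singerOrbit F g U ↔ ∃ m : ℤ, orbm g m U = V := Iff.rfl

lemma orbm_mem_orbit (m : ℤ) (U : Submodule F M) : orbm g m U ∈ singerOrbit F g U := ⟨m, rfl⟩

lemma orbit_self (U : Submodule F M) : U ∈ singerOrbit F g U := ⟨0, orbm_zero g U⟩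

lemma orbit_eq_of_mem {U V : Submodule F M} (h : V ∈ singerOrbit F g U) :
    singerOrbit F g V = singerOrbit F g U := by
  obtain ⟨m, rfl⟩ := h
  ext W
  constructor
  · rintro ⟨t, rfl⟩
    exact ⟨t + m, by show orbm g (t + m) U = orbm g t (orbm g m U); rw [orbm_add]⟩
  · rintro ⟨t, rfl⟩
    refine ⟨t - m, ?_⟩
    show orbm g (t - m) (orbm g m U) = orbm g t U
    rw [← orbm_add]
    congr 1
    ring

lemma orbit_finrank {U V : Submodule F M} (h : V ∈ singerOrbit F g U) :
    finrank F V = finrank F U := by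
  obtain ⟨m, rfl⟩ := h
  exact orbm_finrank g m U

lemma orbm_diff {a b : ℤ} {A : Submodule F M} (h : orbm g a A = orbm g b A) :
    orbm g (a - b) A = A := by
  have h1 : orbm g (-b) (orbm g a A) = orbm g (-b) (orbm g b A) := by rw [h]
  rw [← orbm_add, ← orbm_add, neg_add_cancel, orbm_zero] at h1
  rw [show a - b = -b + a by ring, h1]

lemma orbit_ncard {U : Submodule F M} {d : ℕ} (hdpos : 0 < d)
    (hdper : orbm g (d : ℤ) U = U) (hdvd : ∀ z : ℤ, orbm g z U = U → (d : ℤ) ∣ z) :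
    (singerOrbit F g U).ncard = d := by
  have hrange : singerOrbit F g U = Set.range (fun i : Fin d => orbm g ((i : ℕ) : ℤ) U) := by
    ext V
    constructor
    · rintro ⟨m, rfl⟩
      have h1 : orbm g m U = orbm g (m % (d : ℤ)) U :=
        orbm_mod_period hdper (by exact_mod_cast hdpos) m
      have h0 : 0 ≤ m % (d : ℤ) := Int.emod_nonneg m (by exact_mod_cast hdpos.ne')
      have hlt : m % (d : ℤ) < d := Int.emod_lt_of_pos m (by exact_mod_cast hdpos)
      refine ⟨⟨(m % (d : ℤ)).toNat, by omega⟩, ?_⟩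
      show orbm g _ U = orbm g m U
      rw [h1]
      congr 1
      simp [Int.toNat_of_nonneg h0]
    · rintro ⟨i, rfl⟩
      exact ⟨_, rfl⟩
  have hinj : Function.Injective (fun i : Fin d => orbm g ((i : ℕ) : ℤ) U) := by
    intro i j hij
    have h1 : orbm g (((i : ℕ) : ℤ) - ((j : ℕ) : ℤ)) U = U := orbm_diff hij
    have h2 := hdvd _ h1
    have h3 : d ∣ (((i : ℕ) : ℤ) - ((j : ℕ) : ℤ)).natAbs := by
      have := Int.natAbs_dvd_natAbs.2 h2
      simpa using this
    have hi := i.2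
    have hj := j.2
    have hlt : (((i : ℕ) : ℤ) - ((j : ℕ) : ℤ)).natAbs < d := by omega
    have := Nat.eq_zero_of_dvd_of_lt h3 hlt
    exact Fin.ext (by omega)
  rw [hrange, ← Set.image_univ, Set.ncard_image_of_injective _ hinj, Set.ncard_univ,
    Nat.card_eq_fintype_card, Fintype.card_fin]

/-- Derivation of the `Setup` structure from the basic hypotheses. -/
lemma setup_of (hL0 : finrank F L0 = 1)
    (hsurj : ∀ L : Submodule F M, finrank F L = 1 → ∃ m : ℤ, orbm g m L0 = L)
    (hNL : {L : Submodule F M | finrank F L = 1}.ncard = N) : Setup g L0 N := by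
  classical
  haveI : Finite (Submodule F M) :=
    Finite.of_injective (fun L => (L : Set M)) SetLike.coe_injective
  -- find a positive period of L0
  obtain ⟨x, y, hxy, hf⟩ :=
    Finite.exists_ne_map_eq_of_infinite (fun z : ℤ => orbm g z L0)
  have hdiff : orbm g (x - y) L0 = L0 := orbm_diff hf
  have hneg : orbm g (y - x) L0 = L0 := by
    have h0 : orbm g 0 L0 = orbm g (x - y) L0 := by rw [orbm_zero, hdiff]
    have := orbm_diff h0
    rwa [show (0 : ℤ) - (x - y) = y - x by ring] at this
  have hpos : orbm g (((x - y).natAbs : ℕ) : ℤ) L0 = L0 := by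
    rcases le_or_gt y x with h | h
    · rwa [Int.natAbs_of_nonneg (by omega)]
    · rw [show (((x - y).natAbs : ℕ) : ℤ) = y - x by omega]
      exact hneg
  have hnat0 : 0 < (x - y).natAbs := by
    have : x - y ≠ 0 := sub_ne_zero.2 hxy
    omega
  obtain ⟨d, hdpos, hdper, _hmin, hdvd, _⟩ := exists_minimal_period hnat0 hpos
  -- the set of lines is the orbit of L0
  have hlines : {L : Submodule F M | finrank F L = 1} = singerOrbit F g L0 := by
    ext L
    constructor
    · intro hL
      obtain ⟨m, hm⟩ := hsurj L hL
      exact ⟨m, hm⟩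
    · rintro ⟨m, rfl⟩
      show finrank F (orbm g m L0) = 1
      rw [orbm_finrank, hL0]
  have hdN : d = N := by
    rw [← hNL, hlines, orbit_ncard hdpos hdper hdvd]
  subst hdN
  refine ⟨hL0, hsurj, hdpos, hdper, ?_⟩
  intro a b hab
  exact hdvd _ (orbm_diff hab)

end Orbits


section Counting

variable {F : Type} [Field F] [Fintype F] {M : Type} [AddCommGroup M] [Module F M]
  [Fintype M] [FiniteDimensional F M]
variable {g : LinearMap.GeneralLinearGroup F M} {L0 : Submodule F M} {N : ℕ}

lemma lines_in_eq_image (hs : Setup g L0 N) (U : Submodule F M) :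
    {L : Submodule F M | finrank F L = 1 ∧ L ≤ U} = lineZ g L0 '' (Eset F g N L0 U) := by
  ext L
  constructor
  · rintro ⟨hL1, hLU⟩
    obtain ⟨m, rfl⟩ := hs.hsurj L hL1
    refine ⟨(m : ZMod N), ?_, (lineZ_int hs m).symm⟩
    rw [mem_eset_iff, ← lineZ_int hs]
    exact hLU
  · rintro ⟨i, hi, rfl⟩
    exact ⟨lineZ_finrank hs i, (mem_eset_iff U i).1 hi⟩

lemma eset_ncard_eq_lines (hs : Setup g L0 N) (U : Submodule F M) :
    (Eset F g N L0 U).ncard = {L : Submodule F M | finrank F L = 1 ∧ L ≤ U}.ncard := by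
  rw [lines_in_eq_image hs U, Set.ncard_image_of_injective _ (fun _ _ h => lineZ_inj hs h)]

lemma lines_in_ncard_mul (U : Submodule F M) :
    {L : Submodule F M | finrank F L = 1 ∧ L ≤ U}.ncard * (Fintype.card F - 1)
      = Fintype.card F ^ finrank F U - 1 := by
  classical
  have himg : {L : Submodule F M | finrank F L = 1 ∧ L ≤ U}
      = (Submodule.map U.subtype) '' {p : Submodule F ↥U | finrank F p = 1} := by
    ext L
    constructor
    · rintro ⟨hL1, hLU⟩
      refine ⟨Submodule.comap U.subtype L, ?_, ?_⟩
      · show finrank F _ = 1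
        have hmap : Submodule.map U.subtype (Submodule.comap U.subtype L) = L := by
          rw [Submodule.map_comap_subtype, inf_eq_right.2 hLU]
        have := LinearEquiv.finrank_eq
          (Submodule.equivMapOfInjective U.subtype (Submodule.injective_subtype U)
            (Submodule.comap U.subtype L))
        rw [hmap] at this
        rw [this, hL1]
      · rw [Submodule.map_comap_subtype, inf_eq_right.2 hLU]
    · rintro ⟨p, hp1, rfl⟩
      constructor
      · have := LinearEquiv.finrank_eq
          (Submodule.equivMapOfInjective U.subtype (Submodule.injective_subtype U) p)
        rw [← this, hp1]
      · exact Submodule.map_subtype_le U p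
  rw [himg, Set.ncard_image_of_injective _
    (Submodule.map_injective_of_injective (Submodule.injective_subtype U))]
  exact card_lines_mul F

lemma eset_ncard_mul (hs : Setup g L0 N) (U : Submodule F M) :
    (Eset F g N L0 U).ncard * (Fintype.card F - 1) = Fintype.card F ^ finrank F U - 1 := by
  rw [eset_ncard_eq_lines hs U]
  exact lines_in_ncard_mul U

lemma eset_ncard_eq_of_finrank_eq (hs : Setup g L0 N) {U U' : Submodule F M}
    (h : finrank F U = finrank F U') :
    (Eset F g N L0 U).ncard = (Eset F g N L0 U').ncard := by
  have h1 := eset_ncard_mul hs U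
  have h2 := eset_ncard_mul hs U'
  rw [h] at h1
  have hq : 0 < Fintype.card F - 1 := by
    have : 1 < Fintype.card F := Fintype.one_lt_card
    omega
  exact Nat.eq_of_mul_eq_mul_right hq (h1.trans h2.symm)

lemma eset_pair (hs : Setup g L0 N) {U : Submodule F M} (h2 : 2 ≤ finrank F U) :
    ∃ i j : ZMod N, i ∈ Eset F g N L0 U ∧ j ∈ Eset F g N L0 U ∧ i ≠ j := by
  obtain ⟨L1, L2, _L3, ⟨h1, hh2, _⟩, ⟨hle1, hle2, _⟩, h12, _, _⟩ := exists_three_lines F h2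
  obtain ⟨a, rfl⟩ := hs.hsurj L1 h1
  obtain ⟨b, rfl⟩ := hs.hsurj L2 hh2
  refine ⟨(a : ZMod N), (b : ZMod N), ?_, ?_, ?_⟩
  · rw [mem_eset_iff, ← lineZ_int hs]; exact hle1
  · rw [mem_eset_iff, ← lineZ_int hs]; exact hle2
  · intro he
    apply h12
    rw [lineZ_int hs a, lineZ_int hs b, he]

end Counting


section Dist

variable {F : Type} [Field F] [Fintype F] {M : Type} [AddCommGroup M] [Module F M]
  [Fintype M] [FiniteDimensional F M]
variable {g : LinearMap.GeneralLinearGroup F M} {L0 : Submodule F M} {N : ℕ}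

lemma val_inj (hs : Setup g L0 N) {a b : ZMod N} (h : a.val = b.val) : a = b := by
  haveI : NeZero N := ⟨hs.hNpos.ne'⟩
  calc a = ((a.val : ℕ) : ZMod N) := by rw [ZMod.natCast_val, ZMod.cast_id]
    _ = ((b.val : ℕ) : ZMod N) := by rw [h]
    _ = b := by rw [ZMod.natCast_val, ZMod.cast_id]

/-- Analysis of equal circular distances: the differences agree up to sign. -/
lemma circDist_cases (hs : Setup g L0 N) {i j i' j' : ZMod N}
    (h : circDist N i j = circDist N i' j') :
    i - j = i' - j' ∨ i - j = j' - i' := by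
  unfold circDist at h
  rcases min_choice (i - j).val (j - i).val with h1 | h1 <;>
    rcases min_choice (i' - j').val (j' - i').val with h2 | h2 <;>
      rw [h1] at h <;> rw [h2] at h
  · exact Or.inl (val_inj hs h)
  · exact Or.inr (val_inj hs h)
  · right
    have h4 : j - i = i' - j' := val_inj hs h
    have h3 : i - j = -(j - i) := by ring
    rw [h3, h4]
    ring
  · left
    have h4 : j - i = j' - i' := val_inj hs h
    have h3 : i - j = -(j - i) := by ring
    rw [h3, h4]
    ring

lemma circDist_shift (i m : ZMod N) : circDist N i (i - m) = min m.val (-m).val := by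
  unfold circDist
  congr 1 <;> congr 1 <;> ring

/-- Key lemma: a multiplicity-free subspace meets each of its proper translates in at
most one line index. -/
lemma common_shift (hs : Setup g L0 N) {U : Submodule F M}
    (hmf : multiplicityFree F g N L0 U) {m i j : ZMod N} (hm : m ≠ 0)
    (hi : i ∈ Eset F g N L0 U) (hj : j ∈ Eset F g N L0 U)
    (hi' : i - m ∈ Eset F g N L0 U) (hj' : j - m ∈ Eset F g N L0 U) (hij : i ≠ j) : False := by
  have hsubne : ∀ a : ZMod N, a ≠ a - m := by
    intro a ha
    apply hm
    have : a - (a - m) = 0 := by rw [← ha]; ring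
    calc m = a - (a - m) := by ring
      _ = 0 := this
  have hcd : circDist N i (i - m) = circDist N j (j - m) := by
    rw [circDist_shift, circDist_shift]
  have hset := hmf i hi (i - m) hi' j hj (j - m) hj' (hsubne i) (hsubne j) hcd
  have hiin : i ∈ ({j, j - m} : Set (ZMod N)) := by rw [← hset]; simp
  have hjin : j ∈ ({i, i - m} : Set (ZMod N)) := by rw [hset]; simp
  simp only [Set.mem_insert_iff, Set.mem_singleton_iff] at hiin hjin
  rcases hiin with h1 | h1
  · exact hij h1
  rcases hjin with h2 | h2
  · exact hij h2.symm
  -- now i = j - m and j = i - m, hence m + m = 0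
  have h2m : m + m = 0 := by
    have : i = (i - m) - m := by rw [← h2]; exact h1
    have h3 : m + m = i - ((i - m) - m) := by ring
    rw [h3, ← this]
    ring
  -- plane trick
  have hL1 : lineZ g L0 i ≤ U := (mem_eset_iff U i).1 hi
  have hL2 : lineZ g L0 (i - m) ≤ U := (mem_eset_iff U (i - m)).1 hi'
  have hne12 : lineZ g L0 i ≠ lineZ g L0 (i - m) := by
    intro he
    exact hsubne i (lineZ_inj hs he)
  obtain ⟨L3, hL3fr, hL3le, hL3ne1, hL3ne2⟩ :=
    exists_third_line F (lineZ_finrank hs i) (lineZ_finrank hs (i - m)) hne12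
  obtain ⟨z, hz⟩ := hs.hsurj L3 hL3fr
  rw [lineZ_int hs] at hz
  set e : ZMod N := (z : ZMod N) with he
  have heE : e ∈ Eset F g N L0 U := by
    rw [mem_eset_iff, hz]
    exact hL3le.trans (sup_le hL1 hL2)
  have hene1 : e ≠ i := fun hh => hL3ne1 (by rw [← hz, hh])
  have hene2 : e ≠ i - m := fun hh => hL3ne2 (by rw [← hz, hh])
  -- the plane is invariant under g^(-m)
  set t : ℤ := (m.val : ℤ) with ht
  have htm : ((t : ℤ) : ZMod N) = m := natCast_val_eq_self hs
  have horb : ∀ a : ZMod N, orbm g (-t) (lineZ g L0 a) = lineZ g L0 (a - m) := by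
    intro a
    rw [lineZ, ← orbm_add, lineZ_int hs]
    congr 1
    push_cast
    haveI : NeZero N := ⟨hs.hNpos.ne'⟩
    rw [htm, ZMod.natCast_val, ZMod.cast_id]
    ring
  have hPinv : orbm g (-t) (lineZ g L0 i ⊔ lineZ g L0 (i - m))
      = lineZ g L0 i ⊔ lineZ g L0 (i - m) := by
    rw [orbm_sup, horb, horb]
    have : i - m - m = i := by
      have : i - m - m = i - (m + m) := by ring
      rw [this, h2m, sub_zero]
    rw [this, sup_comm]
  have hemE : e - m ∈ Eset F g N L0 U := by
    rw [mem_eset_iff]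
    have h1 : lineZ g L0 (e - m) = orbm g (-t) L3 := by rw [← horb, hz]
    have h2 : orbm g (-t) L3 ≤ orbm g (-t) (lineZ g L0 i ⊔ lineZ g L0 (i - m)) := by
      apply Submodule.map_mono hL3le
    rw [h1]
    exact (h2.trans (le_of_eq hPinv)).trans (sup_le hL1 hL2)
  -- final contradiction with multiplicity-freeness
  have hcd2 : circDist N i (i - m) = circDist N e (e - m) := by
    rw [circDist_shift, circDist_shift]
  have hset2 := hmf i hi (i - m) hi' e heE (e - m) hemE (hsubne i) (hsubne e) hcd2
  have : e ∈ ({i, i - m} : Set (ZMod N)) := by rw [hset2]; simp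
  simp only [Set.mem_insert_iff, Set.mem_singleton_iff] at this
  rcases this with h | h
  · exact hene1 h
  · exact hene2 h

/-- Converse: if each proper translate meets `E(U)` in at most one index then `U` is
multiplicity free. -/
lemma multfree_of (hs : Setup g L0 N) {U : Submodule F M}
    (hone : ∀ m : ZMod N, m ≠ 0 → ∀ i j : ZMod N, i ∈ Eset F g N L0 U →
      j ∈ Eset F g N L0 U → i - m ∈ Eset F g N L0 U → j - m ∈ Eset F g N L0 U → i = j) :
    multiplicityFree F g N L0 U := by
  intro i hi j hj i' hi' j' hj' hij hij' hcirc
  rcases circDist_cases hs hcirc with hc | hc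
  · have hm : i - j ≠ 0 := sub_ne_zero.2 hij
    have h1 : i - (i - j) ∈ Eset F g N L0 U := by
      have : i - (i - j) = j := by ring
      rwa [this]
    have h2 : i' - (i - j) ∈ Eset F g N L0 U := by
      have : i' - (i - j) = j' := by rw [hc]; ring
      rwa [this]
    have hii' : i = i' := hone (i - j) hm i i' hi hi' h1 h2
    have hjj' : j = j' := by
      have := hc
      rw [hii'] at this
      have h3 : j = i' - (i' - j') := by rw [← this]; ring
      rw [h3]; ring
    rw [hii', hjj']
  · have hm : i - j ≠ 0 := sub_ne_zero.2 hij
    have h1 : i - (i - j) ∈ Eset F g N L0 U := by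
      have : i - (i - j) = j := by ring
      rwa [this]
    have h2 : j' - (i - j) ∈ Eset F g N L0 U := by
      have : j' - (i - j) = i' := by rw [hc]; ring
      rwa [this]
    have hij'' : i = j' := hone (i - j) hm i j' hi hj' h1 h2
    have hji' : j = i' := by
      have := hc
      rw [hij''] at this
      have h3 : j = j' - (j' - j) := by ring
      rw [h3, this]; ring
    rw [hij'', hji', Set.pair_comm]

lemma subspaceDist_add (V W : Submodule F M) :
    subspaceDist F V W + 2 * finrank F ↥(V ⊓ W) = finrank F ↥V + finrank F ↥W := by
  have h := Submodule.finrank_sup_add_finrank_inf_eq V W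
  have hle : finrank F ↥(V ⊓ W) ≤ finrank F ↥(V ⊔ W) :=
    Submodule.finrank_mono (le_trans inf_le_left le_sup_left)
  unfold subspaceDist
  omega

lemma inf_two_of_pair (hs : Setup g L0 N) {V W : Submodule F M} {i j : ZMod N}
    (hiV : i ∈ Eset F g N L0 V) (hiW : i ∈ Eset F g N L0 W)
    (hjV : j ∈ Eset F g N L0 V) (hjW : j ∈ Eset F g N L0 W) (hij : i ≠ j) :
    2 ≤ finrank F ↥(V ⊓ W) := by
  rw [mem_eset_iff] at hiV hiW hjV hjW
  exact two_lines_le_finrank F (lineZ_finrank hs i) (lineZ_finrank hs j)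
    (fun h => hij (lineZ_inj hs h)) (le_inf hiV hiW) (le_inf hjV hjW)

lemma pair_of_inf_two (hs : Setup g L0 N) {V W : Submodule F M}
    (h2 : 2 ≤ finrank F ↥(V ⊓ W)) :
    ∃ i j : ZMod N, i ≠ j ∧ i ∈ Eset F g N L0 V ∧ i ∈ Eset F g N L0 W ∧
      j ∈ Eset F g N L0 V ∧ j ∈ Eset F g N L0 W := by
  obtain ⟨i, j, hi, hj, hij⟩ := eset_pair hs h2
  rw [mem_eset_iff] at hi hj
  refine ⟨i, j, hij, ?_, ?_, ?_, ?_⟩ <;> rw [mem_eset_iff]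
  · exact hi.trans inf_le_left
  · exact hi.trans inf_le_right
  · exact hj.trans inf_le_left
  · exact hj.trans inf_le_right

end Dist


section Part2

variable {F : Type} [Field F] [Fintype F] {M : Type} [AddCommGroup M] [Module F M]
  [Fintype M] [FiniteDimensional F M]
variable {g : LinearMap.GeneralLinearGroup F M} {L0 : Submodule F M} {N : ℕ}

lemma ncard_iUnion_fin {X : Type*} :
    ∀ {n : ℕ} (f : Fin n → Set X), (∀ i, (f i).Finite) →
      (∀ i j, i ≠ j → Disjoint (f i) (f j)) →
      (⋃ i, f i).ncard = ∑ i, (f i).ncard := by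
  intro n
  induction n with
  | zero =>
      intro f _ _
      simp [Set.iUnion_of_empty]
  | succ n ih =>
      intro f hfin hdisj
      have hsplit : (⋃ i, f i) = f 0 ∪ ⋃ i : Fin n, f i.succ := by
        ext x
        simp only [Set.mem_iUnion, Set.mem_union]
        constructor
        · rintro ⟨i, hi⟩
          rcases Fin.eq_zero_or_eq_succ i with h | ⟨j, rfl⟩
          · exact Or.inl (h ▸ hi)
          · exact Or.inr ⟨j, hi⟩
        · rintro (h | ⟨j, hj⟩)
          · exact ⟨0, h⟩
          · exact ⟨j.succ, hj⟩
      have hfin0 : (f 0).Finite := hfin 0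
      have hfinU : (⋃ i : Fin n, f i.succ).Finite :=
        Set.finite_iUnion (fun i : Fin n => hfin i.succ)
      have hd0 : Disjoint (f 0) (⋃ i : Fin n, f i.succ) :=
        Set.disjoint_iUnion_right.2 fun i => hdisj _ _ (Fin.succ_ne_zero i).symm
      rw [hsplit, Set.ncard_union_eq hd0 hfin0 hfinU, ih (fun i => f i.succ) (fun i => hfin _)
        (fun i j hij => hdisj _ _ (fun h => hij (Fin.succ_injective n h))), Fin.sum_univ_succ]

lemma orbit_disjoint {U U' : Submodule F M} (h : singerOrbit F g U ≠ singerOrbit F g U') :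
    Disjoint (singerOrbit F g U) (singerOrbit F g U') := by
  rw [Set.disjoint_left]
  intro V hV hV'
  exact h ((orbit_eq_of_mem hV).symm.trans (orbit_eq_of_mem hV'))

lemma stab_trivial (hs : Setup g L0 N) {U : Submodule F M}
    (hmf : multiplicityFree F g N L0 U) (h2 : 2 ≤ finrank F U) :
    ∀ z : ℤ, orbm g z U = U → (N : ℤ) ∣ z := by
  intro z hz
  by_contra hnd
  have hm : (z : ZMod N) ≠ 0 := by
    intro h0
    exact hnd ((ZMod.intCast_zmod_eq_zero_iff_dvd z N).1 h0)
  have hEinv : ∀ i : ZMod N, i ∈ Eset F g N L0 U → i - (z : ZMod N) ∈ Eset F g N L0 U := by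
    intro i hi
    have := (eset_orbm hs U z i).1 (by rwa [hz])
    exact this
  obtain ⟨i, j, hi, hj, hij⟩ := eset_pair hs h2
  exact common_shift hs hmf hm hi hj (hEinv i hi) (hEinv j hj) hij

lemma orbm_eq_of_cast_eq (hs : Setup g L0 N) {a b : ℤ} (h : (a : ZMod N) = (b : ZMod N))
    (U : Submodule F M) : orbm g a U = orbm g b U := by
  have : a % (N : ℤ) = b % (N : ℤ) := (ZMod.intCast_eq_intCast_iff' a b N).1 h
  rw [orbm_mod hs a, orbm_mod hs b, this]

/-- The main "backward" part: the union of the orbits is a good code. -/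
lemma part2 (hs : Setup g L0 N) {k n : ℕ} (hk : 2 ≤ k)
    (U : Fin n → Submodule F M)
    (hdim : ∀ i, finrank F (U i) = k)
    (horb : ∀ i j : Fin n, i ≠ j → singerOrbit F g (U i) ≠ singerOrbit F g (U j))
    (hmf : ∀ i, multiplicityFree F g N L0 (U i))
    (hdisj : ∀ i j : Fin n, i ≠ j → ∀ c : ℕ,
      valueOccurs F g N L0 (U i) c → ¬ valueOccurs F g N L0 (U j) c) :
    (∀ i, (singerOrbit F g (U i)).ncard = N) ∧
    (∀ V ∈ ⋃ i, singerOrbit F g (U i), finrank F V = k) ∧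
    (⋃ i, singerOrbit F g (U i)).ncard = n * N ∧
    (∀ h ∈ Subgroup.zpowers g, ∀ V ∈ ⋃ i, singerOrbit F g (U i),
      Submodule.map (h : M →ₗ[F] M) V ∈ ⋃ i, singerOrbit F g (U i)) ∧
    (∀ V ∈ ⋃ i, singerOrbit F g (U i), ∀ W ∈ ⋃ i, singerOrbit F g (U i),
      V ≠ W → 2 * (k - 1) ≤ subspaceDist F V W) := by
  haveI : Finite (Submodule F M) :=
    Finite.of_injective (fun L => (L : Set M)) SetLike.coe_injective
  have hcard : ∀ i, (singerOrbit F g (U i)).ncard = N := by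
    intro i
    exact orbit_ncard hs.hNpos (fixN hs (U i))
      (stab_trivial hs (hmf i) (by rw [hdim i]; exact hk))
  refine ⟨hcard, ?_, ?_, ?_, ?_⟩
  · intro V hV
    obtain ⟨s, hs'⟩ := Set.mem_iUnion.1 hV
    rw [orbit_finrank hs']
    exact hdim s
  · rw [ncard_iUnion_fin _ (fun i => Set.toFinite _)
      (fun i j hij => orbit_disjoint (horb i j hij))]
    simp only [hcard, Finset.sum_const, Finset.card_univ, Fintype.card_fin, smul_eq_mul]
  · intro h hh V hV
    obtain ⟨z, rfl⟩ := Subgroup.mem_zpowers_iff.1 hh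
    obtain ⟨s, hsV⟩ := Set.mem_iUnion.1 hV
    obtain ⟨m, rfl⟩ := hsV
    apply Set.mem_iUnion.2 ⟨s, ?_⟩
    refine ⟨z + m, ?_⟩
    show orbm g (z + m) (U s) = orbm g z (orbm g m (U s))
    rw [orbm_add]
  · intro V hV W hW hVW
    obtain ⟨i, hiV⟩ := Set.mem_iUnion.1 hV
    obtain ⟨j, hjW⟩ := Set.mem_iUnion.1 hW
    obtain ⟨a, rfl⟩ := hiV
    obtain ⟨b, rfl⟩ := hjW
    have hfrV : finrank F (orbm g a (U i)) = k := by rw [orbm_finrank]; exact hdim i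
    have hfrW : finrank F (orbm g b (U j)) = k := by rw [orbm_finrank]; exact hdim j
    have hinf : finrank F ↥(orbm g a (U i) ⊓ orbm g b (U j)) ≤ 1 := by
      by_contra hc
      push_neg at hc
      obtain ⟨c1, c2, hc12, hc1V, hc1W, hc2V, hc2W⟩ := pair_of_inf_two hs hc
      rw [eset_orbm hs] at hc1V hc2V
      rw [eset_orbm hs] at hc1W hc2W
      by_cases hij : i = j
      · subst hij
        have hab : (a : ZMod N) ≠ (b : ZMod N) := by
          intro he
          exact hVW (orbm_eq_of_cast_eq hs he (U i))
        have hm : (b : ZMod N) - (a : ZMod N) ≠ 0 := sub_ne_zero.2 (Ne.symm hab)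
        refine common_shift hs (hmf i) hm hc1V hc2V ?_ ?_ ?_
        · have : c1 - (a : ZMod N) - ((b : ZMod N) - (a : ZMod N)) = c1 - (b : ZMod N) := by
            ring
          rwa [this]
        · have : c2 - (a : ZMod N) - ((b : ZMod N) - (a : ZMod N)) = c2 - (b : ZMod N) := by
            ring
          rwa [this]
        · intro he
          apply hc12
          have h3 : c1 = c1 - (a : ZMod N) + a := by ring
          rw [h3, he]
          ring
      · set c := circDist N (c1 - (a : ZMod N)) (c2 - (a : ZMod N)) with hc'
        have hocc1 : valueOccurs F g N L0 (U i) c := by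
          refine ⟨c1 - (a : ZMod N), hc1V, c2 - (a : ZMod N), hc2V, ?_, rfl⟩
          intro he
          apply hc12
          have h3 : c1 = c1 - (a : ZMod N) + a := by ring
          rw [h3, he]
          ring
        have hocc2 : valueOccurs F g N L0 (U j) c := by
          refine ⟨c1 - (b : ZMod N), hc1W, c2 - (b : ZMod N), hc2W, ?_, ?_⟩
          · intro he
            apply hc12
            have h3 : c1 = c1 - (b : ZMod N) + b := by ring
            rw [h3, he]
            ring
          · rw [hc']
            unfold circDist
            congr 2 <;> ring
        exact hdisj i j hij c hocc1 hocc2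
    have hadd := subspaceDist_add (F := F) (orbm g a (U i)) (orbm g b (U j))
    rw [hfrV, hfrW] at hadd
    show 2 * (k - 1) ≤ subspaceDist F (orbm g a (U i)) (orbm g b (U j))
    omega

end Part2


section Forward

variable {F : Type} [Field F] [Fintype F] {M : Type} [AddCommGroup M] [Module F M]
  [Fintype M] [FiniteDimensional F M]
variable {g : LinearMap.GeneralLinearGroup F M} {L0 : Submodule F M} {N : ℕ}

/-- Two distinct codewords of a good code cannot share two line indices. -/
lemma code_share (hs : Setup g L0 N) {k : ℕ} (hk : 2 ≤ k) {C : Set (Submodule F M)}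
    (hCdim : ∀ V ∈ C, finrank F V = k)
    (hCdist : ∀ V ∈ C, ∀ W ∈ C, V ≠ W → 2 * (k - 1) ≤ subspaceDist F V W)
    {V W : Submodule F M} (hV : V ∈ C) (hW : W ∈ C) (hVW : V ≠ W) {i j : ZMod N}
    (hij : i ≠ j) (hiV : i ∈ Eset F g N L0 V) (hiW : i ∈ Eset F g N L0 W)
    (hjV : j ∈ Eset F g N L0 V) (hjW : j ∈ Eset F g N L0 W) : False := by
  have h2 := inf_two_of_pair hs hiV hiW hjV hjW hij
  have hd := hCdist V hV W hW hVW
  have hadd := subspaceDist_add (F := F) V W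
  rw [hCdim V hV, hCdim W hW] at hadd
  omega

lemma eset_add_of_period (hs : Setup g L0 N) {U : Submodule F M} {z : ℤ}
    (hz : orbm g z U = U) {i : ZMod N} (hi : i ∈ Eset F g N L0 U) :
    i + (z : ZMod N) ∈ Eset F g N L0 U := by
  have h1 : (i + (z : ZMod N)) ∈ Eset F g N L0 (orbm g z U) := by
    rw [eset_orbm hs]
    simpa using hi
  rwa [hz] at h1

lemma eset_sub_of_period (hs : Setup g L0 N) {U : Submodule F M} {z : ℤ}
    (hz : orbm g z U = U) {i : ZMod N} (hi : i ∈ Eset F g N L0 U) :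
    i - (z : ZMod N) ∈ Eset F g N L0 U := by
  have h0 : orbm g 0 U = orbm g z U := by rw [orbm_zero, hz]
  have hneg : orbm g (-z) U = U := by
    have := orbm_diff h0
    rwa [zero_sub] at this
  have := eset_add_of_period hs hneg hi
  rwa [Int.cast_neg, ← sub_eq_add_neg] at this

/-- For a short-orbit codeword, all differences of elements of `E(U)` are periods. -/
lemma short_coset (hs : Setup g L0 N) {k : ℕ} (hk : 2 ≤ k) {C : Set (Submodule F M)}
    (hCdim : ∀ V ∈ C, finrank F V = k)
    (hCinv : ∀ z : ℤ, ∀ V ∈ C, orbm g z V ∈ C)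
    (hCdist : ∀ V ∈ C, ∀ W ∈ C, V ≠ W → 2 * (k - 1) ≤ subspaceDist F V W)
    {U : Submodule F M} (hU : U ∈ C) {d : ℕ} (hdpos : 0 < d) (hdlt : d < N)
    (hdper : orbm g (d : ℤ) U = U) :
    ∀ e e' : ZMod N, e ∈ Eset F g N L0 U → e' ∈ Eset F g N L0 U →
      orbm g ((e.val : ℤ) - (e'.val : ℤ)) U = U := by
  intro e e' he he'
  by_contra hW
  set z : ℤ := (e.val : ℤ) - (e'.val : ℤ) with hzdef
  have hWC : orbm g z U ∈ C := hCinv z U hU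
  have hdz : ((d : ℕ) : ZMod N) ≠ 0 := by
    intro h0
    have := (ZMod.natCast_eq_zero_iff d N).1 h0
    have := Nat.le_of_dvd hdpos this
    omega
  have hzc : ((z : ℤ) : ZMod N) = e - e' := by
    haveI : NeZero N := ⟨hs.hNpos.ne'⟩
    rw [hzdef]
    push_cast
    rw [ZMod.natCast_val, ZMod.cast_id, ZMod.natCast_val, ZMod.cast_id]
  have hedE : e + ((d : ℕ) : ZMod N) ∈ Eset F g N L0 U := by
    have := eset_add_of_period hs hdper he
    rwa [Int.cast_natCast] at this
  have hedE' : e' + ((d : ℕ) : ZMod N) ∈ Eset F g N L0 U := by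
    have := eset_add_of_period hs hdper he'
    rwa [Int.cast_natCast] at this
  have heW : e ∈ Eset F g N L0 (orbm g z U) := by
    rw [eset_orbm hs, hzc]
    have : e - (e - e') = e' := by ring
    rwa [this]
  have hedW : e + ((d : ℕ) : ZMod N) ∈ Eset F g N L0 (orbm g z U) := by
    rw [eset_orbm hs, hzc]
    have : e + ((d : ℕ) : ZMod N) - (e - e') = e' + ((d : ℕ) : ZMod N) := by ring
    rwa [this]
  have hne : e ≠ e + ((d : ℕ) : ZMod N) := by
    intro h0
    apply hdz
    have := congrArg (fun x => x - e) h0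
    simpa using this.symm
  exact code_share hs hk hCdim hCdist hU hWC (fun h => hW h.symm) hne he heW hedE hedW

/-- A short-orbit codeword has `N / d` line indices, where `d` is its minimal period. -/
lemma short_eset_ncard (hs : Setup g L0 N) {U : Submodule F M} {d : ℕ} (hdpos : 0 < d)
    (hdN : d ∣ N) (hdper : orbm g (d : ℤ) U = U)
    (hcoset : ∀ e e' : ZMod N, e ∈ Eset F g N L0 U → e' ∈ Eset F g N L0 U →
      orbm g ((e.val : ℤ) - (e'.val : ℤ)) U = U)
    (hdvd : ∀ z : ℤ, orbm g z U = U → (d : ℤ) ∣ z)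
    (hne : (Eset F g N L0 U).Nonempty) :
    (Eset F g N L0 U).ncard = N / d := by
  haveI : NeZero N := ⟨hs.hNpos.ne'⟩
  obtain ⟨e0, he0⟩ := hne
  have hNd : N / d * d = N := Nat.div_mul_cancel hdN
  have hNdpos : 0 < N / d := by
    rcases Nat.eq_zero_or_pos (N / d) with h | h
    · rw [h] at hNd
      simp at hNd
      have := hs.hNpos
      omega
    · exact h
  set ι : Fin (N / d) → ZMod N := fun t => e0 + (((t : ℕ) * d : ℕ) : ZMod N) with hι
  have hmem : ∀ s : ℕ, e0 + ((s * d : ℕ) : ZMod N) ∈ Eset F g N L0 U := by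
    intro s
    induction s with
    | zero => simpa using he0
    | succ s ih =>
        have h1 : e0 + (((s + 1) * d : ℕ) : ZMod N)
            = (e0 + ((s * d : ℕ) : ZMod N)) + (((d : ℕ) : ℤ) : ZMod N) := by
          push_cast
          ring
        rw [h1]
        exact eset_add_of_period hs hdper ih
  have hrange : Eset F g N L0 U = Set.range ι := by
    ext e
    constructor
    · intro he
      obtain ⟨c, hc⟩ := hdvd _ (hcoset e e0 he he0)
      set r : ℤ := c % ((N / d : ℕ) : ℤ) with hr
      have hr0 : 0 ≤ r := Int.emod_nonneg c (by exact_mod_cast hNdpos.ne')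
      have hrlt : r < ((N / d : ℕ) : ℤ) := Int.emod_lt_of_pos c (by exact_mod_cast hNdpos)
      refine ⟨⟨r.toNat, by omega⟩, ?_⟩
      show e0 + ((r.toNat * d : ℕ) : ZMod N) = e
      have he0e : e = e0 + ((d * c : ℤ) : ZMod N) := by
        have h1 : (((e.val : ℤ) - (e0.val : ℤ) : ℤ) : ZMod N) = ((d * c : ℤ) : ZMod N) := by
          rw [hc]
        push_cast at h1
        rw [ZMod.natCast_val, ZMod.cast_id, ZMod.natCast_val, ZMod.cast_id] at h1
        have h2 : ((↑d * c : ℤ) : ZMod N) = e - e0 := by push_cast; rw [h1]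
        rw [h2]
        ring
      have hNdZ : ((N / d : ℕ) : ℤ) * d = N := by exact_mod_cast congrArg (Nat.cast : ℕ → ℤ) hNd
      have hdc : ((d * c : ℤ) : ZMod N) = ((d * r : ℤ) : ZMod N) := by
        have hmod := Int.mul_ediv_add_emod c ((N / d : ℕ) : ℤ)
        have hdiv : (N : ℤ) ∣ d * c - d * r := by
          refine ⟨c / ((N / d : ℕ) : ℤ), ?_⟩
          rw [hr]
          linear_combination (-(d : ℤ)) * hmod + (c / ((N / d : ℕ) : ℤ)) * hNdZ
        have h0 : ((d * c - d * r : ℤ) : ZMod N) = 0 :=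
          (ZMod.intCast_zmod_eq_zero_iff_dvd _ N).2 hdiv
        push_cast at h0
        push_cast
        linear_combination h0
      have h3 : ((r.toNat : ℕ) : ℤ) = r := Int.toNat_of_nonneg hr0
      have h4 : ((r.toNat : ℕ) : ZMod N) = ((r : ℤ) : ZMod N) := by
        conv_rhs => rw [← h3]
        push_cast
        ring
      have hrt : ((r.toNat * d : ℕ) : ZMod N) = ((d * r : ℤ) : ZMod N) := by
        push_cast
        rw [h4]
        push_cast
        ring
      rw [hrt, ← hdc, ← he0e]
    · rintro ⟨t, rfl⟩
      exact hmem t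
  have hinj : Function.Injective ι := by
    intro t1 t2 h12
    have h2 : (((t1 : ℕ) * d : ℕ) : ZMod N) = (((t2 : ℕ) * d : ℕ) : ZMod N) := by
      have := congrArg (fun x => x - e0) h12
      simpa [hι] using this
    have hsub : (N / d - 1) * d = N - d := by rw [Nat.sub_mul, hNd, one_mul]
    have hb1 : (t1 : ℕ) * d < N := by
      have h1 := t1.2
      have h2 : (t1 : ℕ) * d ≤ (N / d - 1) * d := Nat.mul_le_mul_right d (by omega)
      rw [hsub] at h2
      have := hs.hNpos
      omega
    have hb2 : (t2 : ℕ) * d < N := by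
      have h1 := t2.2
      have h2 : (t2 : ℕ) * d ≤ (N / d - 1) * d := Nat.mul_le_mul_right d (by omega)
      rw [hsub] at h2
      have := hs.hNpos
      omega
    have := congrArg ZMod.val h2
    rw [ZMod.val_cast_of_lt hb1, ZMod.val_cast_of_lt hb2] at this
    exact Fin.ext (Nat.eq_of_mul_eq_mul_right hdpos this)
  rw [hrange, ← Set.image_univ, Set.ncard_image_of_injective _ hinj, Set.ncard_univ,
    Nat.card_eq_fintype_card, Fintype.card_fin]

end Forward


section ForwardB

variable {F : Type} [Field F] [Fintype F] {M : Type} [AddCommGroup M] [Module F M]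
  [Fintype M] [FiniteDimensional F M]
variable {g : LinearMap.GeneralLinearGroup F M} {L0 : Submodule F M} {N : ℕ}

/-- Decomposition of an invariant set all of whose orbits are full. -/
lemma decompose (hNpos : 0 < N) :
    ∀ c : ℕ, ∀ D : Set (Submodule F M), D.ncard = c →
      (∀ z : ℤ, ∀ V ∈ D, orbm g z V ∈ D) →
      (∀ V ∈ D, (singerOrbit F g V).ncard = N) →
      ∃ (s : ℕ) (R : Fin s → Submodule F M), c = s * N ∧ (∀ i, R i ∈ D) ∧
        (∀ i j, i ≠ j → singerOrbit F g (R i) ≠ singerOrbit F g (R j)) ∧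
        (⋃ i, singerOrbit F g (R i)) = D := by
  haveI : Finite (Submodule F M) :=
    Finite.of_injective (fun L => (L : Set M)) SetLike.coe_injective
  intro c
  induction c using Nat.strong_induction_on with
  | _ c ih =>
    intro D hDc hDinv hDorb
    have hDfin : D.Finite := Set.toFinite D
    rcases Set.eq_empty_or_nonempty D with rfl | ⟨U, hU⟩
    · refine ⟨0, Fin.elim0, by simpa using hDc.symm, fun i => i.elim0, fun i => i.elim0, ?_⟩
      simp
    · have hOsub : singerOrbit F g U ⊆ D := by
        rintro V ⟨m, rfl⟩
        exact hDinv m U hU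
      have hON : (singerOrbit F g U).ncard = N := hDorb U hU
      have hD'card : (D \ singerOrbit F g U).ncard = c - N := by
        rw [Set.ncard_diff hOsub (Set.toFinite _), hDc, hON]
      have hNle : N ≤ c := by
        rw [← hDc, ← hON]
        exact Set.ncard_le_ncard hOsub hDfin
      have hlt : c - N < c := by omega
      have hD'inv : ∀ z : ℤ, ∀ V ∈ D \ singerOrbit F g U, orbm g z V ∈ D \ singerOrbit F g U := by
        intro z V hV
        refine ⟨hDinv z V hV.1, ?_⟩
        intro hmem
        apply hV.2
        have h1 : singerOrbit F g (orbm g z V) = singerOrbit F g V :=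
          orbit_eq_of_mem (orbm_mem_orbit z V)
        have h2 : singerOrbit F g (orbm g z V) = singerOrbit F g U := orbit_eq_of_mem hmem
        have h3 : singerOrbit F g V = singerOrbit F g U := by rw [← h1, h2]
        rw [← h3]
        exact orbit_self V
      obtain ⟨s, R, hs1, hR1, hR2, hR3⟩ := ih (c - N) hlt (D \ singerOrbit F g U) hD'card
        hD'inv (fun V hV => hDorb V hV.1)
      refine ⟨s + 1, Fin.cons U R, by rw [add_mul, one_mul]; omega, ?_, ?_, ?_⟩
      · intro i
        rcases Fin.eq_zero_or_eq_succ i with rfl | ⟨j, rfl⟩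
        · simpa using hU
        · rw [Fin.cons_succ]
          exact (hR1 j).1
      · intro i j hij
        rcases Fin.eq_zero_or_eq_succ i with rfl | ⟨i', rfl⟩ <;>
          rcases Fin.eq_zero_or_eq_succ j with rfl | ⟨j', rfl⟩
        · exact absurd rfl hij
        · rw [Fin.cons_zero, Fin.cons_succ]
          intro he
          exact (hR1 j').2 (he.symm ▸ orbit_self (R j'))
        · rw [Fin.cons_succ, Fin.cons_zero]
          intro he
          exact (hR1 i').2 (he ▸ orbit_self (R i'))
        · rw [Fin.cons_succ, Fin.cons_succ]
          exact hR2 i' j' (fun h => hij (congrArg Fin.succ h))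
      · have hsplit : (⋃ i, singerOrbit F g (Fin.cons (α := fun _ => Submodule F M) U R i))
            = singerOrbit F g U ∪ ⋃ j, singerOrbit F g (R j) := by
          ext x
          simp only [Set.mem_iUnion, Set.mem_union]
          constructor
          · rintro ⟨i, hi⟩
            rcases Fin.eq_zero_or_eq_succ i with rfl | ⟨j, rfl⟩
            · left; simpa using hi
            · right; exact ⟨j, by rwa [Fin.cons_succ] at hi⟩
          · rintro (h | ⟨j, hj⟩)
            · exact ⟨0, by simpa using h⟩
            · exact ⟨j.succ, by rwa [Fin.cons_succ]⟩
        rw [hsplit, hR3, Set.union_diff_cancel hOsub]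

/-- In a good code every codeword has trivial stabiliser. -/
lemma no_short (hs : Setup g L0 N) {k n : ℕ} (hk : 2 ≤ k) {C : Set (Submodule F M)}
    (hCdim : ∀ V ∈ C, finrank F V = k) (hCcard : C.ncard = n * N)
    (hCinv : ∀ z : ℤ, ∀ V ∈ C, orbm g z V ∈ C)
    (hCdist : ∀ V ∈ C, ∀ W ∈ C, V ≠ W → 2 * (k - 1) ≤ subspaceDist F V W) :
    ∀ U ∈ C, ∀ z : ℤ, orbm g z U = U → (N : ℤ) ∣ z := by
  haveI : Finite (Submodule F M) :=
    Finite.of_injective (fun L => (L : Set M)) SetLike.coe_injective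
  -- auxiliary: every short codeword has the same minimal period and lies in one orbit
  intro U hU
  obtain ⟨d, hdpos, hdper, _hdmin, hdvd, hdN⟩ := exists_minimal_period hs.hNpos (fixN hs U)
  rcases eq_or_lt_of_le (Nat.le_of_dvd hs.hNpos hdN) with hdN' | hdlt
  · intro z hz
    have := hdvd z hz
    rwa [hdN'] at this
  exfalso
  have hdz : ((d : ℕ) : ZMod N) ≠ 0 := by
    intro h0
    have h1 := (ZMod.natCast_eq_zero_iff d N).1 h0
    have := Nat.le_of_dvd hdpos h1
    omega
  have hUcoset := short_coset hs hk hCdim hCinv hCdist hU hdpos hdlt hdper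
  have hUne : (Eset F g N L0 U).Nonempty := by
    obtain ⟨i, _, hi, _, _⟩ := eset_pair hs (U := U) (by rw [hCdim U hU]; exact hk)
    exact ⟨i, hi⟩
  have hUcard := short_eset_ncard hs hdpos hdN hdper hUcoset hdvd hUne
  -- every short codeword is in the orbit of U
  have huniq : ∀ V ∈ C, ∀ dV : ℕ, 0 < dV → dV ∣ N → orbm g (dV : ℤ) V = V →
      (∀ z : ℤ, orbm g z V = V → (dV : ℤ) ∣ z) → dV < N →
      singerOrbit F g V = singerOrbit F g U := by
    intro V hV dV hdVpos hdVN hdVper hdVdvd hdVlt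
    have hVcoset := short_coset hs hk hCdim hCinv hCdist hV hdVpos hdVlt hdVper
    have hVne : (Eset F g N L0 V).Nonempty := by
      obtain ⟨i, _, hi, _, _⟩ := eset_pair hs (U := V) (by rw [hCdim V hV]; exact hk)
      exact ⟨i, hi⟩
    have hVcard := short_eset_ncard hs hdVpos hdVN hdVper hVcoset hdVdvd hVne
    have hsame : (Eset F g N L0 U).ncard = (Eset F g N L0 V).ncard :=
      eset_ncard_eq_of_finrank_eq hs (by rw [hCdim U hU, hCdim V hV])
    have hdd : dV = d := by
      rw [hUcard, hVcard] at hsame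
      have h1 : N / (N / d) = d := Nat.div_div_self hdN hs.hNpos.ne'
      have h2 : N / (N / dV) = dV := Nat.div_div_self hdVN hs.hNpos.ne'
      rw [← h1, ← h2, hsame]
    subst hdd
    -- now move V close to U and compare
    obtain ⟨e0, he0⟩ := hUne
    obtain ⟨e0', he0'⟩ := hVne
    set z : ℤ := (e0.val : ℤ) - (e0'.val : ℤ) with hzdef
    have hWC : orbm g z V ∈ C := hCinv z V hV
    have hzc : ((z : ℤ) : ZMod N) = e0 - e0' := by
      haveI : NeZero N := ⟨hs.hNpos.ne'⟩
      rw [hzdef]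
      push_cast
      rw [ZMod.natCast_val, ZMod.cast_id, ZMod.natCast_val, ZMod.cast_id]
    have he0W : e0 ∈ Eset F g N L0 (orbm g z V) := by
      rw [eset_orbm hs, hzc]
      have h3 : e0 - (e0 - e0') = e0' := by ring
      rwa [h3]
    have he0dU : e0 + ((dV : ℕ) : ZMod N) ∈ Eset F g N L0 U := by
      have := eset_add_of_period hs hdper he0
      rwa [Int.cast_natCast] at this
    have he0dW : e0 + ((dV : ℕ) : ZMod N) ∈ Eset F g N L0 (orbm g z V) := by
      rw [eset_orbm hs, hzc]
      have h3 : e0 + ((dV : ℕ) : ZMod N) - (e0 - e0') = e0' + ((dV : ℕ) : ZMod N) := by ring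
      rw [h3]
      have := eset_add_of_period hs hdVper he0'
      rwa [Int.cast_natCast] at this
    have hne : e0 ≠ e0 + ((dV : ℕ) : ZMod N) := by
      intro h0
      apply hdz
      have := congrArg (fun x => x - e0) h0
      simpa using this.symm
    by_cases hWU : orbm g z V = U
    · rw [← hWU]
      exact (orbit_eq_of_mem (orbm_mem_orbit z V)).symm
    · exact absurd (code_share hs hk hCdim hCdist hU hWC (fun h => hWU h.symm) hne
        he0 he0W he0dU he0dW) (fun h => h)
  -- all orbits outside the orbit of U are full
  have hfullout : ∀ V ∈ C \ singerOrbit F g U, (singerOrbit F g V).ncard = N := by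
    intro V hV
    obtain ⟨dV, hdVpos, hdVper, _h, hdVdvd, hdVN⟩ := exists_minimal_period hs.hNpos (fixN hs V)
    rcases eq_or_lt_of_le (Nat.le_of_dvd hs.hNpos hdVN) with hdV' | hdVlt
    · apply orbit_ncard hs.hNpos (fixN hs V)
      intro z hz
      have := hdVdvd z hz
      rwa [hdV'] at this
    · exfalso
      apply hV.2
      have := huniq V hV.1 dV hdVpos hdVN hdVper hdVdvd hdVlt
      rw [← this]
      exact orbit_self V
  have hOsub : singerOrbit F g U ⊆ C := by
    rintro V ⟨m, rfl⟩
    exact hCinv m U hU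
  have hCfin : C.Finite := Set.toFinite C
  have hOcard : (singerOrbit F g U).ncard = d := orbit_ncard hdpos hdper hdvd
  have hD'inv : ∀ z : ℤ, ∀ V ∈ C \ singerOrbit F g U, orbm g z V ∈ C \ singerOrbit F g U := by
    intro z V hV
    refine ⟨hCinv z V hV.1, ?_⟩
    intro hmem
    apply hV.2
    have h1 : singerOrbit F g (orbm g z V) = singerOrbit F g V :=
      orbit_eq_of_mem (orbm_mem_orbit z V)
    have h2 : singerOrbit F g (orbm g z V) = singerOrbit F g U := orbit_eq_of_mem hmem
    have h3 : singerOrbit F g V = singerOrbit F g U := by rw [← h1, h2]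
    rw [← h3]
    exact orbit_self V
  obtain ⟨s, _R, hs1, _, _, _⟩ := decompose hs.hNpos ((C \ singerOrbit F g U).ncard)
    (C \ singerOrbit F g U) rfl hD'inv hfullout
  have hD'c : (C \ singerOrbit F g U).ncard = n * N - d := by
    rw [Set.ncard_diff hOsub (Set.toFinite _), hCcard, hOcard]
  have hdle : d ≤ n * N := by
    rw [← hCcard, ← hOcard]
    exact Set.ncard_le_ncard hOsub hCfin
  rw [hD'c] at hs1
  -- n * N - d = s * N with 0 < d < N: contradiction
  have hslt : s * N < n * N := by omega
  have hsn : s < n := Nat.lt_of_mul_lt_mul_right hslt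
  have h2 : (n - s) * N = d := by
    rw [Nat.sub_mul]
    omega
  have h3 : N ≤ (n - s) * N := by
    calc N = 1 * N := (one_mul N).symm
    _ ≤ (n - s) * N := Nat.mul_le_mul_right N (by omega)
  omega

/-- The forward direction. -/
lemma forward (hs : Setup g L0 N) {k n : ℕ} (hk : 2 ≤ k) {C : Set (Submodule F M)}
    (hCdim : ∀ V ∈ C, finrank F V = k) (hCcard : C.ncard = n * N)
    (hCinv : ∀ z : ℤ, ∀ V ∈ C, orbm g z V ∈ C)
    (hCdist : ∀ V ∈ C, ∀ W ∈ C, V ≠ W → 2 * (k - 1) ≤ subspaceDist F V W) :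
    ∃ U : Fin n → Submodule F M,
      (∀ i, finrank F (U i) = k) ∧
      (∀ i j : Fin n, i ≠ j → singerOrbit F g (U i) ≠ singerOrbit F g (U j)) ∧
      (∀ i, multiplicityFree F g N L0 (U i)) ∧
      (∀ i j : Fin n, i ≠ j → ∀ c : ℕ,
        valueOccurs F g N L0 (U i) c → ¬ valueOccurs F g N L0 (U j) c) := by
  haveI : NeZero N := ⟨hs.hNpos.ne'⟩
  have hfull := no_short hs hk hCdim hCcard hCinv hCdist
  have horbN : ∀ V ∈ C, (singerOrbit F g V).ncard = N := by
    intro V hV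
    exact orbit_ncard hs.hNpos (fixN hs V) (hfull V hV)
  obtain ⟨s, R, hs1, hR1, hR2, _⟩ := decompose hs.hNpos (n * N) C hCcard hCinv horbN
  have hsn : s = n := Nat.eq_of_mul_eq_mul_right hs.hNpos hs1.symm
  subst hsn
  -- auxiliary: two codewords of different orbits sharing two indices is impossible
  have hshare : ∀ V ∈ C, ∀ W ∈ C, V ≠ W → ∀ i j : ZMod N, i ≠ j →
      i ∈ Eset F g N L0 V → i ∈ Eset F g N L0 W → j ∈ Eset F g N L0 V →
      j ∈ Eset F g N L0 W → False :=
    fun V hV W hW hVW i j hij h1 h2 h3 h4 =>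
      code_share hs hk hCdim hCdist hV hW hVW hij h1 h2 h3 h4
  refine ⟨R, fun i => hCdim (R i) (hR1 i), hR2, ?_, ?_⟩
  · intro i0
    apply multfree_of hs
    intro m hm i j hiE hjE hiE' hjE'
    by_contra hij
    set z : ℤ := (m.val : ℤ) with hz
    have hzm : ((z : ℤ) : ZMod N) = m := natCast_val_eq_self hs
    have hWC : orbm g z (R i0) ∈ C := hCinv z (R i0) (hR1 i0)
    have hWne : orbm g z (R i0) ≠ R i0 := by
      intro he
      apply hm
      have hdvd := hfull (R i0) (hR1 i0) z he
      have : m.val = 0 := by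
        have h1 : N ∣ m.val := Int.natCast_dvd_natCast.mp hdvd
        exact Nat.eq_zero_of_dvd_of_lt h1 (ZMod.val_lt m)
      exact (ZMod.val_eq_zero m).1 this
    have hiW : i ∈ Eset F g N L0 (orbm g z (R i0)) := by
      rw [eset_orbm hs, hzm]
      exact hiE'
    have hjW : j ∈ Eset F g N L0 (orbm g z (R i0)) := by
      rw [eset_orbm hs, hzm]
      exact hjE'
    exact hshare (R i0) (hR1 i0) _ hWC (Ne.symm hWne) i j hij hiE hiW hjE hjW
  · rintro i0 j0 hij0 c ⟨a, haE, b, hbE, hab, hcab⟩ ⟨a', haE', b', hbE', hab', hcab'⟩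
    have hcc : circDist N a b = circDist N a' b' := by rw [hcab, hcab']
    have horbne : singerOrbit F g (R i0) ≠ singerOrbit F g (R j0) := hR2 i0 j0 hij0
    rcases circDist_cases hs hcc with hc | hc
    · set z : ℤ := ((a - a').val : ℤ) with hz
      have hzm : ((z : ℤ) : ZMod N) = a - a' := natCast_val_eq_self hs
      have hWC : orbm g z (R j0) ∈ C := hCinv z (R j0) (hR1 j0)
      have hWne : orbm g z (R j0) ≠ R i0 := by
        intro he
        apply horbne
        have h1 : singerOrbit F g (orbm g z (R j0)) = singerOrbit F g (R j0) :=
          orbit_eq_of_mem (orbm_mem_orbit z (R j0))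
        rw [← he, h1]
      have haW : a ∈ Eset F g N L0 (orbm g z (R j0)) := by
        rw [eset_orbm hs, hzm]
        have h3 : a - (a - a') = a' := by ring
        rwa [h3]
      have hbW : b ∈ Eset F g N L0 (orbm g z (R j0)) := by
        rw [eset_orbm hs, hzm]
        have h3 : b - (a - a') = b' := by
          have h4 : b - (a - a') = a' - (a - b) := by ring
          rw [h4, hc]
          ring
        rwa [h3]
      exact hshare (R i0) (hR1 i0) _ hWC (Ne.symm hWne) a b hab haE haW hbE hbW
    · set z : ℤ := ((a - b').val : ℤ) with hz
      have hzm : ((z : ℤ) : ZMod N) = a - b' := natCast_val_eq_self hs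
      have hWC : orbm g z (R j0) ∈ C := hCinv z (R j0) (hR1 j0)
      have hWne : orbm g z (R j0) ≠ R i0 := by
        intro he
        apply horbne
        have h1 : singerOrbit F g (orbm g z (R j0)) = singerOrbit F g (R j0) :=
          orbit_eq_of_mem (orbm_mem_orbit z (R j0))
        rw [← he, h1]
      have haW : a ∈ Eset F g N L0 (orbm g z (R j0)) := by
        rw [eset_orbm hs, hzm]
        have h3 : a - (a - b') = b' := by ring
        rwa [h3]
      have hbW : b ∈ Eset F g N L0 (orbm g z (R j0)) := by
        rw [eset_orbm hs, hzm]
        have h3 : b - (a - b') = a' := by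
          have h4 : b - (a - b') = b' - (a - b) := by ring
          rw [h4, hc]
          ring
        rwa [h3]
      exact hshare (R i0) (hR1 i0) _ hWC (Ne.symm hWne) a b hab haE haW hbE hbW

end ForwardB

end SingerAux

/-- **Theorem 3 of the paper.** There is a constant dimension code of
dimension `k` with exactly `n·N` codewords and minimum subspace distance at least
`2(k−1)` invariant under `⟨g⟩` if and only if there are `n` distinct `⟨g⟩`-orbits on
the `k`-dimensional subspaces whose distance distributions are multiplicity-free and
pairwise disjoint; in that case the code is the union of these `n` orbits, each of
length `N`. -/
theorem singer_code_iff_orbit_selection (q v k n : ℕ) (hkv : k < v) (hk : 2 ≤ k)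
    (F : Type) [Field F] [Fintype F] (hq : Fintype.card F = q)
    (g : LinearMap.GeneralLinearGroup F (Fin v → F))
    (htrans : ∀ L L' : Submodule F (Fin v → F),
      finrank F ↥L = 1 → finrank F ↥L' = 1 →
      ∃ h ∈ Subgroup.zpowers g,
        Submodule.map (h : (Fin v → F) →ₗ[F] (Fin v → F)) L = L')
    (N : ℕ) (hN : N = (q ^ v - 1) / (q - 1))
    (L0 : Submodule F (Fin v → F)) (hL0 : finrank F ↥L0 = 1) :
    ((∃ C : Set (Submodule F (Fin v → F)),
        (∀ V ∈ C, finrank F ↥V = k) ∧ C.ncard = n * N ∧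
        (∀ h ∈ Subgroup.zpowers g, ∀ V ∈ C,
          Submodule.map (h : (Fin v → F) →ₗ[F] (Fin v → F)) V ∈ C) ∧
        (∀ V ∈ C, ∀ W ∈ C, V ≠ W → 2 * (k - 1) ≤ subspaceDist F V W))
      ↔ (∃ U : Fin n → Submodule F (Fin v → F),
          (∀ i, finrank F ↥(U i) = k) ∧
          (∀ i j : Fin n, i ≠ j → singerOrbit F g (U i) ≠ singerOrbit F g (U j)) ∧
          (∀ i, multiplicityFree F g N L0 (U i)) ∧
          (∀ i j : Fin n, i ≠ j → ∀ c : ℕ,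
            valueOccurs F g N L0 (U i) c → ¬ valueOccurs F g N L0 (U j) c)))
    ∧ ∀ U : Fin n → Submodule F (Fin v → F),
        (∀ i, finrank F ↥(U i) = k) →
        (∀ i j : Fin n, i ≠ j → singerOrbit F g (U i) ≠ singerOrbit F g (U j)) →
        (∀ i, multiplicityFree F g N L0 (U i)) →
        (∀ i j : Fin n, i ≠ j → ∀ c : ℕ,
          valueOccurs F g N L0 (U i) c → ¬ valueOccurs F g N L0 (U j) c) →
        (∀ i, (singerOrbit F g (U i)).ncard = N) ∧
        (∀ V ∈ ⋃ i, singerOrbit F g (U i), finrank F ↥V = k) ∧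
        (⋃ i, singerOrbit F g (U i)).ncard = n * N ∧
        (∀ h ∈ Subgroup.zpowers g, ∀ V ∈ ⋃ i, singerOrbit F g (U i),
          Submodule.map (h : (Fin v → F) →ₗ[F] (Fin v → F)) V
            ∈ ⋃ i, singerOrbit F g (U i)) ∧
        (∀ V ∈ ⋃ i, singerOrbit F g (U i), ∀ W ∈ ⋃ i, singerOrbit F g (U i),
          V ≠ W → 2 * (k - 1) ≤ subspaceDist F V W) := by
  classical
  have hq2 : 1 < Fintype.card F := Fintype.one_lt_card
  have hsurj : ∀ L : Submodule F (Fin v → F), finrank F ↥L = 1 →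
      ∃ m : ℤ, SingerAux.orbm g m L0 = L := by
    intro L hL
    obtain ⟨h, hh, hmap⟩ := htrans L0 L hL0 hL
    obtain ⟨z, rfl⟩ := Subgroup.mem_zpowers_iff.1 hh
    exact ⟨z, hmap⟩
  have hfr : finrank F (Fin v → F) = v := by
    rw [Module.finrank_pi, Fintype.card_fin]
  have hNL : {L : Submodule F (Fin v → F) | finrank F ↥L = 1}.ncard = N := by
    have h1 := SingerAux.card_lines_mul F (M := Fin v → F)
    rw [hfr, hq] at h1
    rw [hN]
    exact (Nat.div_eq_of_eq_mul_left (by omega) h1.symm).symm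
  have hs := SingerAux.setup_of hL0 hsurj hNL
  constructor
  · constructor
    · rintro ⟨C, hCdim, hCcard, hCinv, hCdist⟩
      have hCinvZ : ∀ z : ℤ, ∀ V ∈ C, SingerAux.orbm g z V ∈ C := by
        intro z V hV
        exact hCinv (g ^ z) (Subgroup.mem_zpowers_iff.2 ⟨z, rfl⟩) V hV
      exact SingerAux.forward hs hk hCdim hCcard hCinvZ hCdist
    · rintro ⟨U, h1, h2, h3, h4⟩
      obtain ⟨_hc1, hc2, hc3, hc4, hc5⟩ := SingerAux.part2 hs hk U h1 h2 h3 h4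
      exact ⟨⋃ i, singerOrbit F g (U i), hc2, hc3, hc4, hc5⟩
  · intro U h1 h2 h3 h4
    exact SingerAux.part2 hs hk U h1 h2 h3 h4
end

section
/- There exist 74 three-dimensional subspaces of GF(2)^6 such that any two distinct ones intersect in a subspace of dimension at most 1; equivalently, there is a constant dimension code in GF(2)^6 of dimension 3 with 74 codewords and minimum subspace distance at least 4, so A_2(6,4,3) ≥ 74. -/
open Module

set_option maxHeartbeats 4000000
set_option maxRecDepth 10000

/-! ### Auxiliary machinery -/

/-- The vector in `GF(2)^6` whose coordinates are the binary digits of `n`. -/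
def phi (n : ℕ) : Fin 6 → ZMod 2 := fun i => ((n >>> (i : ℕ)) % 2 : ℕ)

lemma phi_zero : phi 0 = 0 := by funext i; simp [phi]

lemma sr_mod (x i : ℕ) : (x >>> i) % 2 = (x.testBit i).toNat := by
  rw [Nat.testBit_eq_decide_div_mod_eq, Nat.shiftRight_eq_div_pow]
  rcases Nat.mod_two_eq_zero_or_one (x / 2 ^ i) with h | h <;> simp [h]

lemma phi_add (a b : ℕ) : phi a + phi b = phi (a ^^^ b) := by
  funext i
  show (((a >>> (i:ℕ)) % 2 : ℕ) : ZMod 2) + (((b >>> (i:ℕ)) % 2 : ℕ) : ZMod 2)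
      = ((((a ^^^ b) >>> (i:ℕ)) % 2 : ℕ) : ZMod 2)
  rw [sr_mod, sr_mod, sr_mod, Nat.testBit_xor]
  cases h1 : a.testBit (i:ℕ) <;> cases h2 : b.testBit (i:ℕ) <;> decide

lemma phi_injOn : ∀ a < 64, ∀ b < 64, phi a = phi b → a = b := by decide

/-- The 8-element subgroup of `ℕ` (under xor) generated by `a`, `b`, `c`. -/
def T3 (a b c : ℕ) : Finset ℕ :=
  Finset.image (fun t : Bool × Bool × Bool =>
    (cond t.1 a 0) ^^^ ((cond t.2.1 b 0) ^^^ (cond t.2.2 c 0))) Finset.univ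

lemma cond_xor (x y : Bool) (a : ℕ) : (cond x a 0) ^^^ (cond y a 0) = cond (x.xor y) a 0 := by
  cases x <;> cases y <;> simp [Nat.xor_self]

lemma xor_left_comm (a b c : ℕ) : a ^^^ (b ^^^ c) = b ^^^ (a ^^^ c) := by
  rw [← Nat.xor_assoc, Nat.xor_comm a b, Nat.xor_assoc]

lemma T3_closed (a b c : ℕ) : ∀ s ∈ T3 a b c, ∀ t ∈ T3 a b c, s ^^^ t ∈ T3 a b c := by
  intro s hs t ht
  simp only [T3, Finset.mem_image, Finset.mem_univ, true_and] at hs ht ⊢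
  obtain ⟨⟨x1, x2, x3⟩, rfl⟩ := hs
  obtain ⟨⟨y1, y2, y3⟩, rfl⟩ := ht
  refine ⟨(x1.xor y1, x2.xor y2, x3.xor y3), ?_⟩
  rw [← cond_xor x1 y1, ← cond_xor x2 y2, ← cond_xor x3 y3]
  simp only [Nat.xor_assoc, Nat.xor_comm, xor_left_comm]

lemma zero_mem_T3 (a b c : ℕ) : 0 ∈ T3 a b c := by
  simp only [T3, Finset.mem_image, Finset.mem_univ, true_and]
  exact ⟨(false, false, false), by simp⟩

lemma T3_lt (a b c : ℕ) (ha : a < 64) (hb : b < 64) (hc : c < 64) :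
    ∀ x ∈ T3 a b c, x < 64 := by
  intro x hx
  simp only [T3, Finset.mem_image, Finset.mem_univ, true_and] at hx
  obtain ⟨⟨x1, x2, x3⟩, rfl⟩ := hx
  have h1 : cond x1 a 0 < 64 := by cases x1 <;> simp [ha]
  have h2 : cond x2 b 0 < 64 := by cases x2 <;> simp [hb]
  have h3 : cond x3 c 0 < 64 := by cases x3 <;> simp [hc]
  have h4 := Nat.xor_lt_two_pow (n := 6) (by simpa using h2) (by simpa using h3)
  exact Nat.xor_lt_two_pow (n := 6) (by simpa using h1) (by simpa using h4)

/-- The subspace of `GF(2)^6` whose elements are `phi` of the members of `T3 a b c`. -/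
def P3 (a b c : ℕ) : Submodule (ZMod 2) (Fin 6 → ZMod 2) where
  carrier := ↑((T3 a b c).image phi)
  add_mem' := by
    intro x y hx hy
    simp only [Finset.coe_image, Set.mem_image, Finset.mem_coe] at hx hy ⊢
    obtain ⟨s, hs, rfl⟩ := hx
    obtain ⟨t, ht, rfl⟩ := hy
    exact ⟨s ^^^ t, T3_closed a b c s hs t ht, (phi_add s t).symm⟩
  zero_mem' := by
    simp only [Finset.coe_image, Set.mem_image, Finset.mem_coe]
    exact ⟨0, zero_mem_T3 a b c, phi_zero⟩
  smul_mem' := by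
    intro d x hx
    rcases (by decide : ∀ z : ZMod 2, z = 0 ∨ z = 1) d with h | h <;> subst h
    · rw [zero_smul]
      simp only [Finset.coe_image, Set.mem_image, Finset.mem_coe]
      exact ⟨0, zero_mem_T3 a b c, phi_zero⟩
    · rw [one_smul]; exact hx

def P3' (p : ℕ × ℕ × ℕ) : Submodule (ZMod 2) (Fin 6 → ZMod 2) := P3 p.1 p.2.1 p.2.2

def T3' (p : ℕ × ℕ × ℕ) : Finset ℕ := T3 p.1 p.2.1 p.2.2

lemma P3'_coe (p : ℕ × ℕ × ℕ) : (P3' p : Set (Fin 6 → ZMod 2)) = ↑((T3' p).image phi) := rfl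

lemma natCard_submodule (V : Submodule (ZMod 2) (Fin 6 → ZMod 2)) :
    Nat.card ↥V = (V : Set (Fin 6 → ZMod 2)).ncard :=
  Nat.card_coe_set_eq (V : Set (Fin 6 → ZMod 2))

lemma natCard_pow_finrank (V : Submodule (ZMod 2) (Fin 6 → ZMod 2)) :
    Nat.card ↥V = 2 ^ finrank (ZMod 2) ↥V := by
  haveI : Fintype ↥V := Fintype.ofFinite _
  rw [Nat.card_eq_fintype_card, card_eq_pow_finrank (K := ZMod 2) (V := ↥V), ZMod.card]
def LD : List ((ℕ × ℕ × ℕ) × List ℕ) := [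
  ((5, 17, 32), [0, 5, 17, 20, 32, 37, 49, 52]),
  ((1, 14, 52), [0, 1, 14, 15, 52, 53, 58, 59]),
  ((10, 21, 32), [0, 10, 21, 31, 32, 42, 53, 63]),
  ((11, 21, 36), [0, 11, 21, 30, 36, 47, 49, 58]),
  ((15, 20, 34), [0, 15, 20, 27, 34, 45, 54, 57]),
  ((14, 19, 34), [0, 14, 19, 29, 34, 44, 49, 63]),
  ((3, 4, 57), [0, 3, 4, 7, 57, 58, 61, 62]),
  ((5, 25, 35), [0, 5, 25, 28, 35, 38, 58, 63]),
  ((9, 18, 33), [0, 9, 18, 27, 33, 40, 51, 58]),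
  ((4, 11, 33), [0, 4, 11, 15, 33, 37, 42, 46]),
  ((12, 19, 37), [0, 12, 19, 31, 37, 41, 54, 58]),
  ((3, 13, 37), [0, 3, 13, 14, 37, 38, 40, 43]),
  ((15, 22, 39), [0, 15, 22, 25, 39, 40, 49, 62]),
  ((6, 17, 43), [0, 6, 17, 23, 43, 45, 58, 60]),
  ((3, 5, 33), [0, 3, 5, 6, 33, 34, 36, 39]),
  ((9, 17, 39), [0, 9, 17, 24, 39, 46, 54, 63]),
  ((4, 17, 34), [0, 4, 17, 21, 34, 38, 51, 55]),
  ((1, 6, 48), [0, 1, 6, 7, 48, 49, 54, 55]),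
  ((4, 9, 49), [0, 4, 9, 13, 49, 53, 56, 60]),
  ((7, 19, 33), [0, 7, 19, 20, 33, 38, 50, 53]),
  ((9, 21, 37), [0, 9, 21, 28, 37, 44, 48, 57]),
  ((5, 11, 51), [0, 5, 11, 14, 51, 54, 56, 61]),
  ((7, 16, 40), [0, 7, 16, 23, 40, 47, 56, 63]),
  ((13, 16, 39), [0, 13, 16, 29, 39, 42, 55, 58]),
  ((1, 12, 34), [0, 1, 12, 13, 34, 35, 46, 47]),
  ((5, 9, 50), [0, 5, 9, 12, 50, 55, 59, 62]),
  ((12, 21, 33), [0, 12, 21, 25, 33, 45, 52, 56]),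
  ((3, 8, 52), [0, 3, 8, 11, 52, 55, 60, 63]),
  ((12, 20, 36), [0, 12, 20, 24, 36, 40, 48, 60]),
  ((8, 17, 36), [0, 8, 17, 25, 36, 44, 53, 61]),
  ((15, 19, 36), [0, 15, 19, 28, 36, 43, 55, 56]),
  ((7, 10, 17), [0, 7, 10, 13, 17, 22, 27, 28]),
  ((10, 20, 35), [0, 10, 20, 30, 35, 41, 55, 61]),
  ((2, 28, 40), [0, 2, 28, 30, 40, 42, 52, 54]),
  ((13, 19, 32), [0, 13, 19, 30, 32, 45, 51, 62]),
  ((6, 9, 32), [0, 6, 9, 15, 32, 38, 41, 47]),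
  ((1, 4, 40), [0, 1, 4, 5, 40, 41, 44, 45]),
  ((4, 18, 32), [0, 4, 18, 22, 32, 36, 50, 54]),
  ((8, 18, 34), [0, 8, 18, 26, 34, 42, 48, 56]),
  ((13, 23, 33), [0, 13, 23, 26, 33, 44, 54, 59]),
  ((1, 26, 36), [0, 1, 26, 27, 36, 37, 62, 63]),
  ((9, 22, 34), [0, 9, 22, 31, 34, 43, 52, 61]),
  ((8, 20, 39), [0, 8, 20, 28, 39, 47, 51, 59]),
  ((6, 19, 40), [0, 6, 19, 21, 40, 46, 59, 61]),
  ((1, 24, 42), [0, 1, 24, 25, 42, 43, 50, 51]),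
  ((14, 21, 39), [0, 14, 21, 27, 39, 41, 50, 60]),
  ((11, 22, 38), [0, 11, 22, 29, 38, 45, 48, 59]),
  ((5, 27, 43), [0, 5, 27, 30, 43, 46, 48, 53]),
  ((3, 12, 17), [0, 3, 12, 15, 17, 18, 29, 30]),
  ((2, 16, 41), [0, 2, 16, 18, 41, 43, 57, 59]),
  ((6, 8, 16), [0, 6, 8, 14, 16, 22, 24, 30]),
  ((10, 18, 38), [0, 10, 18, 24, 38, 44, 52, 62]),
  ((1, 28, 32), [0, 1, 28, 29, 32, 33, 60, 61]),
  ((3, 24, 32), [0, 3, 24, 27, 32, 35, 56, 59]),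
  ((14, 23, 32), [0, 14, 23, 25, 32, 46, 55, 57]),
  ((5, 19, 42), [0, 5, 19, 22, 42, 47, 57, 60]),
  ((7, 9, 35), [0, 7, 9, 14, 35, 36, 42, 45]),
  ((11, 23, 34), [0, 11, 23, 28, 34, 41, 53, 62]),
  ((8, 21, 35), [0, 8, 21, 29, 35, 43, 54, 62]),
  ((1, 2, 20), [0, 1, 2, 3, 20, 21, 22, 23]),
  ((7, 26, 41), [0, 7, 26, 29, 41, 46, 51, 52]),
  ((14, 17, 33), [0, 14, 17, 31, 33, 47, 48, 62]),
  ((3, 9, 16), [0, 3, 9, 10, 16, 19, 25, 26]),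
  ((1, 30, 38), [0, 1, 30, 31, 38, 39, 56, 57]),
  ((15, 16, 35), [0, 15, 16, 31, 35, 44, 51, 60]),
  ((4, 19, 35), [0, 4, 19, 23, 35, 39, 48, 52]),
  ((12, 23, 38), [0, 12, 23, 27, 38, 42, 49, 61]),
  ((11, 17, 35), [0, 11, 17, 26, 35, 40, 50, 57]),
  ((7, 11, 32), [0, 7, 11, 12, 32, 39, 43, 44]),
  ((3, 28, 45), [0, 3, 28, 31, 45, 46, 49, 50]),
  ((7, 25, 34), [0, 7, 25, 30, 34, 37, 59, 60]),
  ((2, 24, 45), [0, 2, 24, 26, 45, 47, 53, 55]),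
  ((2, 13, 48), [0, 2, 13, 15, 48, 50, 61, 63]),
  ((2, 4, 25), [0, 2, 4, 6, 25, 27, 29, 31])]
lemma E1 : ∀ r ∈ LD, T3' r.1 = r.2.toFinset := by decide
lemma E2 : ∀ r ∈ LD, ∀ s ∈ LD, r.1 ≠ s.1 → (r.2.filter (· ∈ s.2)).length ≤ 2 := by decide
lemma E3 : ∀ r ∈ LD, r.2.toFinset.card = 8 := by decide
lemma E4 : ∀ r ∈ LD, r.1.1 < 64 ∧ r.1.2.1 < 64 ∧ r.1.2.2 < 64 := by decide
lemma E5 : ((LD.map Prod.fst).toFinset).card = 74 := by decide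

/-! ### Glue lemmas -/

lemma T3'_lt {r : (ℕ × ℕ × ℕ) × List ℕ} (hr : r ∈ LD) : ∀ x ∈ T3' r.1, x < 64 := by
  obtain ⟨h1, h2, h3⟩ := E4 r hr
  exact T3_lt _ _ _ h1 h2 h3

lemma phi_injOn_set {s : Set ℕ} (hs : ∀ x ∈ s, x < 64) : Set.InjOn phi s :=
  fun a ha b hb h => phi_injOn a (hs a ha) b (hs b hb) h

lemma card_T3' {r : (ℕ × ℕ × ℕ) × List ℕ} (hr : r ∈ LD) : (T3' r.1).card = 8 := by
  rw [E1 r hr]; exact E3 r hr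

lemma natCard_P3' {r : (ℕ × ℕ × ℕ) × List ℕ} (hr : r ∈ LD) : Nat.card ↥(P3' r.1) = 8 := by
  rw [natCard_submodule, P3'_coe, Set.ncard_coe_finset,
    Finset.card_image_of_injOn (phi_injOn_set (fun x hx => T3'_lt hr x hx)),
    card_T3' hr]

lemma finrank_P3' {r : (ℕ × ℕ × ℕ) × List ℕ} (hr : r ∈ LD) :
    finrank (ZMod 2) ↥(P3' r.1) = 3 := by
  have h := natCard_P3' hr
  rw [natCard_pow_finrank] at h
  exact Nat.pow_right_injective (le_refl 2) h

lemma inf_coe' {r s : (ℕ × ℕ × ℕ) × List ℕ} (hr : r ∈ LD) (hs : s ∈ LD) :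
    ((P3' r.1 ⊓ P3' s.1 : Submodule (ZMod 2) (Fin 6 → ZMod 2)) : Set (Fin 6 → ZMod 2))
      = ↑((T3' r.1 ∩ T3' s.1).image phi) := by
  have hinj : Set.InjOn phi (↑(T3' r.1) ∪ ↑(T3' s.1)) := by
    refine phi_injOn_set ?_
    intro x hx
    rcases hx with h | h
    · exact T3'_lt hr x (by exact_mod_cast h)
    · exact T3'_lt hs x (by exact_mod_cast h)
  rw [Submodule.coe_inf, P3'_coe, P3'_coe, ← Finset.coe_inter,
    ← Finset.image_inter_of_injOn _ _ hinj]

lemma card_inter_le {r s : (ℕ × ℕ × ℕ) × List ℕ} (hr : r ∈ LD) (hs : s ∈ LD)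
    (hne : r.1 ≠ s.1) : (T3' r.1 ∩ T3' s.1).card ≤ 2 := by
  rw [E1 r hr, E1 s hs]
  have heq : r.2.toFinset ∩ s.2.toFinset = (r.2.filter (· ∈ s.2)).toFinset := by
    ext x
    simp [List.mem_filter]
  rw [heq]
  exact le_trans (List.toFinset_card_le _) (E2 r hr s hs hne)

lemma finrank_inf_le {r s : (ℕ × ℕ × ℕ) × List ℕ} (hr : r ∈ LD) (hs : s ∈ LD)
    (hne : r.1 ≠ s.1) : finrank (ZMod 2) ↥(P3' r.1 ⊓ P3' s.1) ≤ 1 := by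
  have hcard : Nat.card ↥(P3' r.1 ⊓ P3' s.1) ≤ 2 := by
    rw [natCard_submodule, inf_coe' hr hs, Set.ncard_coe_finset]
    exact le_trans Finset.card_image_le (card_inter_le hr hs hne)
  rw [natCard_pow_finrank] at hcard
  have h2 : (2:ℕ) ^ finrank (ZMod 2) ↥(P3' r.1 ⊓ P3' s.1) ≤ 2 ^ 1 := by simpa using hcard
  exact (Nat.pow_le_pow_iff_right (by norm_num)).mp h2

lemma T3'_eq_of_P3'_eq {r s : (ℕ × ℕ × ℕ) × List ℕ} (hr : r ∈ LD) (hs : s ∈ LD)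
    (h : P3' r.1 = P3' s.1) : T3' r.1 = T3' s.1 := by
  have hc : (↑((T3' r.1).image phi) : Set (Fin 6 → ZMod 2)) = ↑((T3' s.1).image phi) := by
    rw [← P3'_coe, ← P3'_coe, h]
  have hfin : (T3' r.1).image phi = (T3' s.1).image phi := Finset.coe_injective hc
  apply Finset.eq_of_subset_of_card_le
  · intro x hx
    have hm : phi x ∈ (T3' s.1).image phi := by
      rw [← hfin]; exact Finset.mem_image_of_mem _ hx
    obtain ⟨y, hy, hxy⟩ := Finset.mem_image.mp hm
    have hyx := phi_injOn y (T3'_lt hs y hy) x (T3'_lt hr x hx) hxy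
    rwa [← hyx]
  · rw [card_T3' hr, card_T3' hs]

lemma P3'_inj {r s : (ℕ × ℕ × ℕ) × List ℕ} (hr : r ∈ LD) (hs : s ∈ LD)
    (h : P3' r.1 = P3' s.1) : r.1 = s.1 := by
  by_contra hne
  have hle := card_inter_le hr hs hne
  rw [T3'_eq_of_P3'_eq hr hs h, Finset.inter_self, card_T3' hs] at hle
  omega

lemma mem_fst_iff (p : ℕ × ℕ × ℕ) :
    p ∈ (LD.map Prod.fst).toFinset ↔ ∃ r ∈ LD, r.1 = p := by
  simp [List.mem_map]

/-- There exist 74$ three-dimensional subspaces of `GF(2)^6` such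
that any two distinct ones intersect in a subspace of dimension at most 1;
equivalently, a constant dimension code in `GF(2)^6` of dimension 3 with 74
codewords and minimum subspace distance at least 4, so `A_2(6,4,3) ≥ 74`. -/
theorem exists_code_GF2_6_dim3_card_74 :
    ∃ C : Set (Submodule (ZMod 2) (Fin 6 → ZMod 2)),
      C.ncard = 74 ∧
      (∀ V ∈ C, finrank (ZMod 2) ↥V = 3) ∧
      (∀ V ∈ C, ∀ W ∈ C, V ≠ W → finrank (ZMod 2) ↥(V ⊓ W) ≤ 1) ∧
      (∀ V ∈ C, ∀ W ∈ C, V ≠ W → 4 ≤ subspaceDist (ZMod 2) V W) := by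
  classical
  refine ⟨P3' '' ↑((LD.map Prod.fst).toFinset), ?_, ?_, ?_, ?_⟩
  · rw [Set.ncard_image_of_injOn, Set.ncard_coe_finset, E5]
    intro p hp q hq h
    obtain ⟨r, hr, hrp⟩ := (mem_fst_iff p).mp (by exact_mod_cast hp)
    obtain ⟨s, hs, hsq⟩ := (mem_fst_iff q).mp (by exact_mod_cast hq)
    subst hrp; subst hsq
    exact P3'_inj hr hs h
  · rintro V ⟨p, hp, rfl⟩
    obtain ⟨r, hr, hrp⟩ := (mem_fst_iff p).mp (by exact_mod_cast hp)
    subst hrp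
    exact finrank_P3' hr
  · rintro V ⟨p, hp, rfl⟩ W ⟨q, hq, rfl⟩ hne
    obtain ⟨r, hr, hrp⟩ := (mem_fst_iff p).mp (by exact_mod_cast hp)
    obtain ⟨s, hs, hsq⟩ := (mem_fst_iff q).mp (by exact_mod_cast hq)
    subst hrp; subst hsq
    exact finrank_inf_le hr hs (fun h => hne (by rw [P3', h, P3']))
  · rintro V ⟨p, hp, rfl⟩ W ⟨q, hq, rfl⟩ hne
    obtain ⟨r, hr, hrp⟩ := (mem_fst_iff p).mp (by exact_mod_cast hp)
    obtain ⟨s, hs, hsq⟩ := (mem_fst_iff q).mp (by exact_mod_cast hq)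
    subst hrp; subst hsq
    have hsum := Submodule.finrank_sup_add_finrank_inf_eq (P3' r.1) (P3' s.1)
    have h1 := finrank_P3' hr
    have h2 := finrank_P3' hs
    have h3 := finrank_inf_le hr hs (fun h => hne (by rw [P3', h, P3']))
    unfold subspaceDist
    omega
end
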